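/- arXiv:2603.22636 — 6 statements merged into one kernel-verified Lean document; each statement's English description precedes it below -/
import Mathlib

section
/- Let m ≥ 1, let 0 ≤ C ≤ R and δ > 0, and let S ⊆ ℝ^m be a set contained in closedBall(0, R). Suppose that for every y ∈ closedBall(0, C) there exists s ∈ S with ‖y − s‖ ≤ δ. Then for every r ≥ (R − C) + 2δ, the union ⋃_{s ∈ S} closedBall(s, r) is connected. -/
open Metric

/-- Let `m ≥ 1`, `0 ≤ C ≤ R`, `δ > 0`, and let `S ⊆ ℝ^m` be contained in the
closed ball of radius `R` about the origin.  Suppose every point of the closed ball of radius `C`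
about the origin is within distance `δ` of some point of `S`.  Then for every
`r ≥ (R - C) + 2δ`, the union of the closed balls of radius `r` centered at points of `S`
is connected. -/
theorem union_closedBall_connected_of_core_cover {m : ℕ} (hm : 1 ≤ m)
    {C R δ : ℝ} (hC : 0 ≤ C) (hCR : C ≤ R) (hδ : 0 < δ)
    (S : Set (EuclideanSpace ℝ (Fin m)))
    (hSR : S ⊆ closedBall (0 : EuclideanSpace ℝ (Fin m)) R)
    (hcov : ∀ y ∈ closedBall (0 : EuclideanSpace ℝ (Fin m)) C, ∃ s ∈ S, ‖y - s‖ ≤ δ)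
    {r : ℝ} (hr : (R - C) + 2 * δ ≤ r) :
    IsConnected (⋃ s ∈ S, closedBall s r) := by
  obtain ⟨s0, hs0, -⟩ := hcov 0 (by simpa using hC)
  have hRC : (0:ℝ) ≤ R - C := by linarith
  have hδr : δ ≤ r := by linarith
  have hr0 : 0 < r := lt_of_lt_of_le hδ hδr
  -- the core ball is covered by the union
  have hcore : closedBall (0 : EuclideanSpace ℝ (Fin m)) C ⊆ ⋃ s ∈ S, closedBall s r := by
    intro y hy
    obtain ⟨s, hs, hys⟩ := hcov y hy
    exact Set.mem_biUnion hs (by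
      rw [mem_closedBall, dist_eq_norm]; exact hys.trans hδr)
  -- each ball meets the core ball
  have hkey : ∀ s ∈ S, ∃ p : EuclideanSpace ℝ (Fin m),
      p ∈ closedBall s r ∧ p ∈ closedBall (0 : EuclideanSpace ℝ (Fin m)) C := by
    intro s hs
    have hsR : ‖s‖ ≤ R := by simpa [mem_closedBall, dist_zero_right] using hSR hs
    by_cases h : ‖s‖ ≤ C
    · exact ⟨s, mem_closedBall_self hr0.le,
        by simpa [mem_closedBall, dist_zero_right] using h⟩
    · push_neg at h
      have hspos : 0 < ‖s‖ := lt_of_le_of_lt hC h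
      refine ⟨(C / ‖s‖) • s, ?_, ?_⟩
      · rw [mem_closedBall, dist_eq_norm]
        have h1 : s - (C / ‖s‖) • s = (1 - C / ‖s‖) • s := by
          rw [sub_smul, one_smul]
        rw [norm_sub_rev, h1, norm_smul, Real.norm_eq_abs]
        have h2 : C / ‖s‖ ≤ 1 := (div_le_one hspos).mpr h.le
        rw [abs_of_nonneg (by linarith)]
        have h3 : (1 - C / ‖s‖) * ‖s‖ = ‖s‖ - C := by
          field_simp
        rw [h3]; linarith
      · rw [mem_closedBall, dist_zero_right, norm_smul, Real.norm_eq_abs,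
          abs_of_nonneg (div_nonneg hC hspos.le), div_mul_cancel₀ _ hspos.ne']
  -- rewrite the union
  have hU : (⋃ s ∈ S, closedBall s r)
      = ⋃ s ∈ S, (closedBall s r ∪ closedBall (0 : EuclideanSpace ℝ (Fin m)) C) := by
    apply subset_antisymm
    · exact Set.iUnion₂_mono fun s hs => Set.subset_union_left
    · exact Set.iUnion₂_subset fun s hs =>
        Set.union_subset (Set.subset_biUnion_of_mem (u := fun s => closedBall s r) hs) hcore
  constructor
  · exact ⟨s0, Set.mem_biUnion hs0 (mem_closedBall_self hr0.le)⟩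
  · rw [hU, ← Set.sUnion_image]
    apply isPreconnected_sUnion (0 : EuclideanSpace ℝ (Fin m))
    · rintro t ⟨s, hs, rfl⟩
      exact Or.inr (by simpa [mem_closedBall] using hC)
    · rintro t ⟨s, hs, rfl⟩
      obtain ⟨p, hp1, hp2⟩ := hkey s hs
      exact IsPreconnected.union p hp1 hp2
        (convex_closedBall s r).isPreconnected
        (convex_closedBall 0 C).isPreconnected
end

section
/- Let m ≥ 3 and let X and Y be independent random vectors in ℝ^m, each with density f_m. Then there exist a constant C₂ > 0 and R₀ > 0, both depending only on m, such that for all R ≥ R₀ one has P(‖X − Y‖ ≤ 1 | ‖X‖ ≥ R − 1 and ‖Y‖ ≥ R − 1) ≤ C₂ / R^{m−1}. -/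
open MeasureTheory ProbabilityTheory Metric

/-- The heavy-tailed density `f_m(x) = c / (1 + ‖x‖^{m+1})` on `ℝ^m` (with `c` the
normalizing constant). -/
noncomputable def heavyDensity (m : ℕ) (c : ℝ) (x : EuclideanSpace ℝ (Fin m)) : ℝ :=
  c / (1 + ‖x‖ ^ (m + 1))

/-- The measure on `ℝ^m` with density `f_m` with respect to Lebesgue measure. -/
noncomputable def heavyMeasure (m : ℕ) (c : ℝ) : Measure (EuclideanSpace ℝ (Fin m)) :=
  volume.withDensity fun x => ENNReal.ofReal (heavyDensity m c x)

open scoped ENNReal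

set_option linter.unnecessarySeqFocus false

lemma heavyMeasure_apply {m : ℕ} {c : ℝ} {s : Set (EuclideanSpace ℝ (Fin m))}
    (hs : MeasurableSet s) :
    heavyMeasure m c s = ∫⁻ x in s, ENNReal.ofReal (heavyDensity m c x) :=
  withDensity_apply _ hs

lemma heavyMeasure_closedBall_le {m : ℕ} {c : ℝ} (hc : 0 < c)
    {x : EuclideanSpace ℝ (Fin m)} {t : ℝ} (ht : 0 ≤ t) (hx : t + 1 ≤ ‖x‖) :
    heavyMeasure m c (closedBall x 1) ≤
      ENNReal.ofReal (c / (1 + t ^ (m + 1))) *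
        volume (closedBall (0 : EuclideanSpace ℝ (Fin m)) 1) := by
  rw [heavyMeasure_apply measurableSet_closedBall]
  calc ∫⁻ y in closedBall x 1, ENNReal.ofReal (heavyDensity m c y)
      ≤ ∫⁻ _ in closedBall x 1, ENNReal.ofReal (c / (1 + t ^ (m + 1))) := by
        refine setLIntegral_mono measurable_const fun y hy => ?_
        refine ENNReal.ofReal_le_ofReal ?_
        have hd : dist y x ≤ 1 := mem_closedBall.1 hy
        have h1 : ‖x‖ - ‖y‖ ≤ 1 := by
          have := abs_norm_sub_norm_le x y
          have hxy : dist x y ≤ 1 := by rwa [dist_comm]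
          rw [dist_eq_norm] at hxy
          have := abs_le.1 (abs_norm_sub_norm_le x y)
          linarith [this.2]
        have hty : t ≤ ‖y‖ := by linarith
        unfold heavyDensity
        gcongr
    _ = ENNReal.ofReal (c / (1 + t ^ (m + 1))) *
        volume (closedBall (0 : EuclideanSpace ℝ (Fin m)) 1) := by
        rw [setLIntegral_const, Measure.addHaar_closedBall' volume x zero_le_one]
        simp

lemma le_heavyMeasure_tail {m : ℕ} {c : ℝ} (hc : 0 < c) {r : ℝ} (hr : 1 ≤ r) :
    ENNReal.ofReal (c / (1 + (2 * r) ^ (m + 1)) * ((2 ^ m - 1) * r ^ m)) *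
      volume (closedBall (0 : EuclideanSpace ℝ (Fin m)) 1)
      ≤ heavyMeasure m c {x | r ≤ ‖x‖} := by
  have hr0 : (0:ℝ) < r := by linarith
  set E := EuclideanSpace ℝ (Fin m)
  set S : Set E := closedBall 0 (2 * r) \ closedBall 0 r with hS
  have hSsub : S ⊆ {x | r ≤ ‖x‖} := by
    rintro x ⟨-, hx2⟩
    simp only [mem_closedBall, dist_zero_right, not_le] at hx2
    exact le_of_lt hx2
  have hSm : MeasurableSet S := measurableSet_closedBall.diff measurableSet_closedBall
  have htail : MeasurableSet {x : E | r ≤ ‖x‖} :=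
    (isClosed_le continuous_const continuous_norm).measurableSet
  have hvolS : volume S = ENNReal.ofReal ((2 ^ m - 1) * r ^ m) *
      volume (closedBall (0 : E) 1) := by
    rw [hS, measure_diff (closedBall_subset_closedBall (by linarith))
          measurableSet_closedBall.nullMeasurableSet measure_closedBall_lt_top.ne,
        Measure.addHaar_closedBall' volume _ (by linarith : (0:ℝ) ≤ 2 * r),
        Measure.addHaar_closedBall' volume _ hr0.le, finrank_euclideanSpace_fin,
        ← ENNReal.sub_mul (fun _ _ => measure_closedBall_lt_top.ne),
        ← ENNReal.ofReal_sub _ (by positivity)]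
    congr 2
    rw [mul_pow]
    ring
  calc ENNReal.ofReal (c / (1 + (2 * r) ^ (m + 1)) * ((2 ^ m - 1) * r ^ m)) *
        volume (closedBall (0 : E) 1)
      = ENNReal.ofReal (c / (1 + (2 * r) ^ (m + 1))) * volume S := by
        rw [hvolS, ENNReal.ofReal_mul (by positivity), mul_assoc]
    _ = ∫⁻ _ in S, ENNReal.ofReal (c / (1 + (2 * r) ^ (m + 1))) := by
        rw [setLIntegral_const]
    _ ≤ ∫⁻ x in S, ENNReal.ofReal (heavyDensity m c x) := by
        refine setLIntegral_mono
          ((measurable_const.div ((measurable_const.add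
            (measurable_norm.pow_const _)))).ennreal_ofReal) (fun x hx => ?_)
        refine ENNReal.ofReal_le_ofReal ?_
        have hx1 : ‖x‖ ≤ 2 * r := by
          simpa [mem_closedBall, dist_zero_right] using hx.1
        unfold heavyDensity
        gcongr
    _ = heavyMeasure m c S := (heavyMeasure_apply hSm).symm
    _ ≤ heavyMeasure m c {x | r ≤ ‖x‖} := measure_mono hSsub

lemma real_calc {m : ℕ} (hm : 3 ≤ m) {c R : ℝ} (hc : 0 < c) (hR : 4 ≤ R) :
    (c / (1 + (R - 2) ^ (m + 1))) /
      (c / (1 + (2 * (R - 1)) ^ (m + 1)) * ((2 ^ m - 1) * (R - 1) ^ m))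
      ≤ 2 ^ (3 * m + 3) / R ^ (m - 1) := by
  have hR0 : (0:ℝ) < R := by linarith
  have hr : (3:ℝ) ≤ R - 1 := by linarith
  have hr0 : (0:ℝ) < R - 1 := by linarith
  have hs : (2:ℝ) ≤ R - 2 := by linarith
  have hs0 : (0:ℝ) < R - 2 := by linarith
  have h2m : (8:ℝ) ≤ 2 ^ m := by
    calc (8:ℝ) = 2 ^ 3 := by norm_num
    _ ≤ 2 ^ m := pow_le_pow_right₀ (by norm_num) hm
  have h2m1 : (1:ℝ) ≤ 2 ^ m - 1 := by linarith
  have key : (c / (1 + (R - 2) ^ (m + 1))) /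
      (c / (1 + (2 * (R - 1)) ^ (m + 1)) * ((2 ^ m - 1) * (R - 1) ^ m)) =
      (1 + (2 * (R - 1)) ^ (m + 1)) /
        ((1 + (R - 2) ^ (m + 1)) * ((2 ^ m - 1) * (R - 1) ^ m)) := by
    have h1 : (1:ℝ) + (R - 2) ^ (m + 1) ≠ 0 := by positivity
    have h2 : (1:ℝ) + (2 * (R - 1)) ^ (m + 1) ≠ 0 := by positivity
    have h3 : (2:ℝ) ^ m - 1 ≠ 0 := by linarith
    have h4 : (R - 1) ^ m ≠ 0 := by positivity
    field_simp
  rw [key]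
  have h1 : 1 + (2 * (R - 1)) ^ (m + 1) ≤ 2 ^ (m + 2) * R ^ (m + 1) := by
    have ha : (1:ℝ) ≤ (2 * (R - 1)) ^ (m + 1) :=
      one_le_pow₀ (by linarith)
    have hb : (2 * (R - 1)) ^ (m + 1) ≤ (2 * R) ^ (m + 1) := by
      gcongr <;> linarith
    calc 1 + (2 * (R - 1)) ^ (m + 1) ≤ 2 * (2 * R) ^ (m + 1) := by linarith
    _ = 2 ^ (m + 2) * R ^ (m + 1) := by rw [mul_pow]; ring
  have h2 : R ^ (2 * m + 1) / 2 ^ (2 * m + 1) ≤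
      (1 + (R - 2) ^ (m + 1)) * ((2 ^ m - 1) * (R - 1) ^ m) := by
    have ha : (R / 2) ^ (m + 1) ≤ 1 + (R - 2) ^ (m + 1) := by
      have : (R / 2) ^ (m + 1) ≤ (R - 2) ^ (m + 1) := by gcongr <;> linarith
      linarith
    have hb : (R / 2) ^ m ≤ (2 ^ m - 1) * (R - 1) ^ m := by
      have h : (R / 2) ^ m ≤ (R - 1) ^ m := by gcongr <;> linarith
      nlinarith [pow_pos (by linarith : (0:ℝ) < R / 2) m]
    calc R ^ (2 * m + 1) / 2 ^ (2 * m + 1) = (R / 2) ^ (2 * m + 1) := by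
          rw [div_pow]
    _ = (R / 2) ^ (m + 1) * (R / 2) ^ m := by
          rw [← pow_add]; congr 1; ring
    _ ≤ (1 + (R - 2) ^ (m + 1)) * ((2 ^ m - 1) * (R - 1) ^ m) := by
          apply mul_le_mul ha hb (by positivity) (by positivity)
  calc (1 + (2 * (R - 1)) ^ (m + 1)) /
        ((1 + (R - 2) ^ (m + 1)) * ((2 ^ m - 1) * (R - 1) ^ m))
      ≤ (2 ^ (m + 2) * R ^ (m + 1)) / (R ^ (2 * m + 1) / 2 ^ (2 * m + 1)) :=
        div_le_div₀ (by positivity) h1 (by positivity) h2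
    _ = 2 ^ (3 * m + 3) / R ^ m := by
        rw [show 3 * m + 3 = (m + 2) + (2 * m + 1) by ring, pow_add,
          show 2 * m + 1 = (m + 1) + m by ring, pow_add]
        field_simp
        ring
    _ ≤ 2 ^ (3 * m + 3) / R ^ (m - 1) := by
        have hp : R ^ (m - 1) ≤ R ^ m := pow_le_pow_right₀ (by linarith) (Nat.sub_le m 1)
        gcongr

/-- For `m ≥ 3` and `X, Y` independent random vectors in `ℝ^m` each with
density `f_m`, there exist `C₂ > 0` and `R₀ > 0` (depending only on `m`) such that for all
`R ≥ R₀`, `P(‖X − Y‖ ≤ 1 ∣ ‖X‖ ≥ R − 1 and ‖Y‖ ≥ R − 1) ≤ C₂ / R^{m−1}`. -/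
theorem cond_prob_edge_le {m : ℕ} (hm : 3 ≤ m) {c : ℝ} (hc : 0 < c)
    (hprob : IsProbabilityMeasure (heavyMeasure m c))
    {Ω : Type*} [MeasureSpace Ω] [IsProbabilityMeasure (ℙ : Measure Ω)]
    (X Y : Ω → EuclideanSpace ℝ (Fin m)) (hX : Measurable X) (hY : Measurable Y)
    (hindep : IndepFun X Y ℙ)
    (hlawX : Measure.map X ℙ = heavyMeasure m c)
    (hlawY : Measure.map Y ℙ = heavyMeasure m c) :
    ∃ C₂ > (0 : ℝ), ∃ R₀ > (0 : ℝ), ∀ R : ℝ, R₀ ≤ R →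
      ℙ[|{ω | R - 1 ≤ ‖X ω‖ ∧ R - 1 ≤ ‖Y ω‖}] {ω | dist (X ω) (Y ω) ≤ 1}
        ≤ ENNReal.ofReal (C₂ / R ^ (m - 1)) := by
  set μ := heavyMeasure m c with hμ
  refine ⟨2 ^ (3 * m + 3), by positivity, 4, by norm_num, fun R hR => ?_⟩
  have hR0 : (0:ℝ) < R := by linarith
  -- basic sets
  set S₁ : Set (EuclideanSpace ℝ (Fin m)) := {x | R - 1 ≤ ‖x‖} with hS₁def
  have hS₁ : MeasurableSet S₁ := (isClosed_le continuous_const continuous_norm).measurableSet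
  set A : Set Ω := {ω | R - 1 ≤ ‖X ω‖ ∧ R - 1 ≤ ‖Y ω‖} with hAdef
  set B : Set Ω := {ω | dist (X ω) (Y ω) ≤ 1} with hBdef
  have hAeq : A = X ⁻¹' S₁ ∩ Y ⁻¹' S₁ := rfl
  have hA : MeasurableSet A := by rw [hAeq]; exact (hX hS₁).inter (hY hS₁)
  -- volume constant
  set V : ℝ≥0∞ := volume (closedBall (0 : EuclideanSpace ℝ (Fin m)) 1) with hVdef
  have hV0 : V ≠ 0 := (measure_closedBall_pos volume _ one_pos).ne'
  have hVtop : V ≠ ∞ := measure_closedBall_lt_top.ne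
  -- the denominator
  have hPA : ℙ A = μ S₁ * μ S₁ := by
    rw [hAeq, hindep.measure_inter_preimage_eq_mul S₁ S₁ hS₁ hS₁,
      ← Measure.map_apply hX hS₁, ← Measure.map_apply hY hS₁, hlawX, hlawY]
  -- lower bound on μ S₁
  set d₂ : ℝ := c / (1 + (2 * (R - 1)) ^ (m + 1)) * ((2 ^ m - 1) * (R - 1) ^ m) with hd₂def
  have h2m : (8:ℝ) ≤ 2 ^ m := by
    calc (8:ℝ) = 2 ^ 3 := by norm_num
    _ ≤ 2 ^ m := pow_le_pow_right₀ (by norm_num) hm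
  have hd₂pos : 0 < d₂ := by
    have h1 : (0:ℝ) < 2 ^ m - 1 := by linarith
    have : (0:ℝ) < R - 1 := by linarith
    positivity
  have hμS₁low : ENNReal.ofReal d₂ * V ≤ μ S₁ := le_heavyMeasure_tail hc (by linarith)
  have hμS₁0 : μ S₁ ≠ 0 := by
    refine fun h => hV0 ?_
    have := hμS₁low
    rw [h, nonpos_iff_eq_zero, mul_eq_zero] at this
    rcases this with h' | h'
    · exact absurd h' (by simp [ENNReal.ofReal_eq_zero, not_le, hd₂pos])
    · exact h'
  have hμS₁top : μ S₁ ≠ ∞ := (measure_lt_top μ _).ne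
  -- upper bound on the numerator
  set d₁ : ℝ := c / (1 + (R - 2) ^ (m + 1)) with hd₁def
  set T : Set (EuclideanSpace ℝ (Fin m) × EuclideanSpace ℝ (Fin m)) := {p | R - 1 ≤ ‖p.1‖ ∧ dist p.1 p.2 ≤ 1} with hTdef
  have hT : MeasurableSet T := by
    refine (IsClosed.inter ?_ ?_).measurableSet
    · exact isClosed_le continuous_const continuous_fst.norm
    · exact isClosed_le (continuous_fst.dist continuous_snd) continuous_const
  have hmap : Measure.map (fun ω => (X ω, Y ω)) ℙ = μ.prod μ := by
    rw [(indepFun_iff_map_prod_eq_prod_map_map hX.aemeasurable hY.aemeasurable).1 hindep,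
      hlawX, hlawY]
  have hnum : ℙ (A ∩ B) ≤ ENNReal.ofReal d₁ * V * μ S₁ := by
    have hsub : A ∩ B ⊆ (fun ω => (X ω, Y ω)) ⁻¹' T := fun ω hω => ⟨hω.1.1, hω.2⟩
    refine le_trans (measure_mono hsub) ?_
    rw [← Measure.map_apply (hX.prodMk hY) hT, hmap, Measure.prod_apply hT]
    have hbound : ∀ x : EuclideanSpace ℝ (Fin m), μ (Prod.mk x ⁻¹' T) ≤
        S₁.indicator (fun _ => ENNReal.ofReal d₁ * V) x := by
      intro x
      by_cases hx : R - 1 ≤ ‖x‖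
      · have hsub2 : Prod.mk x ⁻¹' T ⊆ closedBall x 1 := by
          intro y hy
          simp only [Set.mem_preimage, hTdef, Set.mem_setOf_eq] at hy
          rw [mem_closedBall, dist_comm]
          exact hy.2
        rw [Set.indicator_of_mem (show x ∈ S₁ from hx)]
        exact le_trans (measure_mono hsub2)
          (heavyMeasure_closedBall_le hc (by linarith) (by linarith))
      · have : Prod.mk x ⁻¹' T = ∅ := by
          ext y; simp only [Set.mem_preimage, hTdef, Set.mem_setOf_eq, Set.mem_empty_iff_false,
            iff_false, not_and]
          exact fun h => absurd h hx
        rw [this]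
        simp
    calc ∫⁻ x, μ (Prod.mk x ⁻¹' T) ∂μ
        ≤ ∫⁻ x, S₁.indicator (fun _ => ENNReal.ofReal d₁ * V) x ∂μ :=
          lintegral_mono hbound
      _ = ENNReal.ofReal d₁ * V * μ S₁ := by
          rw [lintegral_indicator hS₁, setLIntegral_const]
  -- put it together
  rw [cond_apply hA ℙ, hPA]
  calc (μ S₁ * μ S₁)⁻¹ * ℙ (A ∩ B)
      ≤ (μ S₁ * μ S₁)⁻¹ * (ENNReal.ofReal d₁ * V * μ S₁) := by gcongr
    _ = (ENNReal.ofReal d₁ * V) * ((μ S₁)⁻¹ * μ S₁) * (μ S₁)⁻¹ := by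
        rw [ENNReal.mul_inv (Or.inl hμS₁0) (Or.inr hμS₁0)]
        ring
    _ = (ENNReal.ofReal d₁ * V) / (μ S₁) := by
        rw [ENNReal.inv_mul_cancel hμS₁0 hμS₁top, mul_one, div_eq_mul_inv]
    _ ≤ (ENNReal.ofReal d₁ * V) / (ENNReal.ofReal d₂ * V) :=
        ENNReal.div_le_div le_rfl hμS₁low
    _ = ENNReal.ofReal d₁ / ENNReal.ofReal d₂ :=
        ENNReal.mul_div_mul_right _ _ hV0 hVtop
    _ = ENNReal.ofReal (d₁ / d₂) := (ENNReal.ofReal_div_of_pos hd₂pos).symm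
    _ ≤ ENNReal.ofReal (2 ^ (3 * m + 3) / R ^ (m - 1)) :=
        ENNReal.ofReal_le_ofReal (real_calc hm hc hR)
end

section
/- Let m ≥ 3, let X_1, …, X_n be i.i.d. random vectors in ℝ^m with common density f_m, and set R_n = n^{2/m}/(c_m s_{m−1}). For R > 0 let A_n^{[R,∞)} denote the number of indices i ∈ {1,…,n} with ‖X_i‖ ≥ R. Then for all sufficiently large n, P( A_n^{[R_n−1,∞)} < 3 n^{1−2/m} and A_n^{[R_n,∞)} > (1/4) n^{1−2/m} ) > 1/3. -/
open MeasureTheory ProbabilityTheory Filter Metric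
open scoped Classical

/-- `b_m`, the Lebesgue volume of the unit ball in `ℝ^m`. -/
noncomputable def unitBallVol (m : ℕ) : ℝ :=
  (volume (ball (0 : EuclideanSpace ℝ (Fin m)) 1)).toReal

/-- `s_{m−1}`, the surface measure of the unit sphere in `ℝ^m`, equal to `m · b_m`. -/
noncomputable def unitSphereArea (m : ℕ) : ℝ := m * unitBallVol m

/-- `A_n^{[R,∞)}`: the number of indices `i ∈ {0, …, n−1}` with `‖X_i(ω)‖ ≥ R`. -/
noncomputable def countGE {m : ℕ} {Ω : Type*} (X : ℕ → Ω → EuclideanSpace ℝ (Fin m))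
    (n : ℕ) (R : ℝ) (ω : Ω) : ℕ :=
  ((Finset.range n).filter fun i => R ≤ ‖X i ω‖).card

/-!
In polar coordinates `P(‖X‖ ≥ R) = σ ∫_R^∞ r^{m-1} / (1 + r^{m+1}) dr` with `σ = c_m s_{m-1}`,
and for `r ≥ 1` the integrand lies between `r⁻² - r⁻⁶` and `r⁻²`. So the tail is `σ/R` up to a
factor `4/5`, and the normalization `P(‖X‖ ≥ 0) = 1` pins `σ` to `[3/4, 5/4]`. Since
`n = σ R_n a` with `a = n^{1-2/m}`, the two counts have means of order `σ² a`, with constants on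
the correct sides of `3` and `1/4`. A count of independent indicators has variance at most its
mean, so by Chebyshev each deviation of order `a` has probability `O(1/a)`.
-/

open Set

-- The law of `‖x‖` under `f_m(x) dx` is `c_m s_{m-1} heavyProfile m r dr`.
noncomputable def heavyProfile (m : ℕ) (y : ℝ) : ℝ := y ^ (m - 1) / (1 + y ^ (m + 1))

section HeavyProfile

variable {m : ℕ} {y R : ℝ}

lemma measurable_heavyProfile (m : ℕ) : Measurable (heavyProfile m) := by
  unfold heavyProfile; fun_prop

lemma heavyProfile_nonneg (hy : 0 ≤ y) : 0 ≤ heavyProfile m y := by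
  unfold heavyProfile; positivity

lemma heavyProfile_le_pow (hy : 0 ≤ y) : heavyProfile m y ≤ y ^ (m - 1) :=
  div_le_self (by positivity) (le_add_of_nonneg_right (by positivity))

lemma heavyProfile_le_rpow_neg_two (hm : 1 ≤ m) (hy : 0 < y) :
    heavyProfile m y ≤ y ^ (-2 : ℝ) := by
  have hsplit : y ^ (m + 1) = y ^ (m - 1) * y ^ 2 := by rw [← pow_add]; congr 1; omega
  calc heavyProfile m y ≤ y ^ (m - 1) / y ^ (m + 1) :=
        div_le_div_of_nonneg_left (by positivity) (by positivity) (by linarith)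
    _ = y ^ (-2 : ℝ) := by
        rw [hsplit, Real.rpow_neg hy.le, Real.rpow_two]
        field_simp

lemma rpow_neg_two_sub_rpow_neg_six_le_heavyProfile (hm : 3 ≤ m) (hy : 1 ≤ y) :
    y ^ (-2 : ℝ) - y ^ (-6 : ℝ) ≤ heavyProfile m y := by
  have hy0 : 0 < y := one_pos.trans_le hy
  -- `heavyProfile m y = y⁻² u / (1 + u) ≥ y⁻² (1 - 1/u)` for `u = y^{m+1} ≥ y⁴`.
  set P := y ^ (m - 1)
  set Q := y ^ 2
  have hQ : 1 ≤ Q := one_le_pow₀ hy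
  have hQP : Q ≤ P := pow_le_pow_right₀ hy (by omega)
  have hsplit : y ^ (m + 1) = P * Q := by rw [← pow_add]; congr 1; omega
  have hQ3 : y ^ (-6 : ℝ) = (Q ^ 3)⁻¹ := by
    rw [Real.rpow_neg hy0.le, ← pow_mul]; norm_cast
  rw [heavyProfile, hsplit, hQ3, Real.rpow_neg hy0.le, Real.rpow_two,
    inv_sub_inv (by positivity) (by positivity), div_le_div_iff₀ (by positivity) (by positivity)]
  nlinarith [mul_le_mul_of_nonneg_left hQP (by positivity : (0 : ℝ) ≤ Q)]

lemma integrableOn_heavyProfile_Ioi (hm : 1 ≤ m) (hR : 0 < R) :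
    IntegrableOn (heavyProfile m) (Ioi R) := by
  refine (integrableOn_Ioi_rpow_of_lt (by norm_num : (-2 : ℝ) < -1) hR).mono'
    (measurable_heavyProfile m).aestronglyMeasurable ?_
  filter_upwards [ae_restrict_mem measurableSet_Ioi] with y hy
  rw [Real.norm_of_nonneg (heavyProfile_nonneg (hR.trans hy).le)]
  exact heavyProfile_le_rpow_neg_two hm (hR.trans hy)

lemma integrableOn_heavyProfile_Ioc (m : ℕ) : IntegrableOn (heavyProfile m) (Ioc 0 1) := by
  refine (integrableOn_const (C := (1 : ℝ)) (by simp)).mono'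
    (measurable_heavyProfile m).aestronglyMeasurable ?_
  filter_upwards [ae_restrict_mem measurableSet_Ioc] with y hy
  rw [Real.norm_of_nonneg (heavyProfile_nonneg hy.1.le)]
  exact (heavyProfile_le_pow hy.1.le).trans (pow_le_one₀ hy.1.le hy.2)

lemma integrableOn_heavyProfile (hm : 1 ≤ m) : IntegrableOn (heavyProfile m) (Ioi 0) := by
  rw [← Ioc_union_Ioi_eq_Ioi zero_le_one]
  exact (integrableOn_heavyProfile_Ioc m).union (integrableOn_heavyProfile_Ioi hm one_pos)

lemma integral_rpow_neg_Ioi {a R : ℝ} (ha : 1 < a) (hR : 0 < R) :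
    ∫ y in Ioi R, y ^ (-a) = R ^ (1 - a) / (a - 1) := by
  rw [integral_Ioi_rpow_of_lt (by linarith) hR, ← neg_div_neg_eq]
  ring_nf

lemma setIntegral_heavyProfile_Ioi_le (hm : 1 ≤ m) (hR : 0 < R) :
    ∫ y in Ioi R, heavyProfile m y ≤ R⁻¹ := by
  calc ∫ y in Ioi R, heavyProfile m y ≤ ∫ y in Ioi R, y ^ (-2 : ℝ) :=
        setIntegral_mono_on (integrableOn_heavyProfile_Ioi hm hR)
          (integrableOn_Ioi_rpow_of_lt (by norm_num) hR) measurableSet_Ioi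
          fun y hy => heavyProfile_le_rpow_neg_two hm (hR.trans hy)
    _ = R⁻¹ := by
        rw [← Real.rpow_neg_one, integral_rpow_neg_Ioi (by norm_num) hR]; norm_num

lemma le_setIntegral_heavyProfile_Ioi (hm : 3 ≤ m) (hR : 1 ≤ R) :
    4 / 5 * R⁻¹ ≤ ∫ y in Ioi R, heavyProfile m y := by
  have hR0 : 0 < R := one_pos.trans_le hR
  have h2 := integrableOn_Ioi_rpow_of_lt (by norm_num : (-2 : ℝ) < -1) hR0
  have h6 := integrableOn_Ioi_rpow_of_lt (by norm_num : (-6 : ℝ) < -1) hR0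
  have h51 : R ^ (-5 : ℝ) ≤ R ^ (-1 : ℝ) := Real.rpow_le_rpow_of_exponent_le hR (by norm_num)
  calc 4 / 5 * R⁻¹ ≤ R ^ (-1 : ℝ) - R ^ (-5 : ℝ) / 5 := by
        rw [Real.rpow_neg_one] at h51 ⊢; linarith
    _ = ∫ y in Ioi R, (y ^ (-2 : ℝ) - y ^ (-6 : ℝ)) := by
        rw [integral_sub h2 h6, integral_rpow_neg_Ioi (by norm_num) hR0,
          integral_rpow_neg_Ioi (by norm_num) hR0]
        norm_num
    _ ≤ ∫ y in Ioi R, heavyProfile m y :=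
        setIntegral_mono_on (h2.sub h6) (integrableOn_heavyProfile_Ioi (by omega) hR0)
          measurableSet_Ioi fun y hy =>
            rpow_neg_two_sub_rpow_neg_six_le_heavyProfile hm (hR.trans hy.le)

lemma integral_heavyProfile_le (hm : 3 ≤ m) : ∫ y in Ioi 0, heavyProfile m y ≤ 4 / 3 := by
  have hm' : (3 : ℝ) ≤ m := by exact_mod_cast hm
  have hpow : ∫ y in Ioc (0 : ℝ) 1, y ^ (m - 1) = (m : ℝ)⁻¹ := by
    rw [← intervalIntegral.integral_of_le zero_le_one, integral_pow,
      Nat.sub_add_cancel (by omega), Nat.cast_sub (by omega)]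
    simp [zero_pow (by omega : m ≠ 0)]
  have hlow : ∫ y in Ioc (0 : ℝ) 1, heavyProfile m y ≤ (m : ℝ)⁻¹ :=
    hpow ▸ setIntegral_mono_on (integrableOn_heavyProfile_Ioc m)
      (intervalIntegral.intervalIntegrable_pow _).1 measurableSet_Ioc
      fun y hy => heavyProfile_le_pow hy.1.le
  have hhigh := setIntegral_heavyProfile_Ioi_le (m := m) (by omega) one_pos
  rw [← Ioc_union_Ioi_eq_Ioi zero_le_one, setIntegral_union (Ioc_disjoint_Ioi le_rfl)
    measurableSet_Ioi (integrableOn_heavyProfile_Ioc m)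
    (integrableOn_heavyProfile_Ioi (by omega) one_pos)]
  have : (m : ℝ)⁻¹ ≤ 1 / 3 := by rw [inv_eq_one_div]; gcongr
  rw [inv_one] at hhigh
  linarith

lemma le_integral_heavyProfile (hm : 3 ≤ m) : 4 / 5 ≤ ∫ y in Ioi 0, heavyProfile m y := by
  calc (4 / 5 : ℝ) = 4 / 5 * (1 : ℝ)⁻¹ := by norm_num
    _ ≤ ∫ y in Ioi 1, heavyProfile m y := le_setIntegral_heavyProfile_Ioi hm le_rfl
    _ ≤ ∫ y in Ioi 0, heavyProfile m y :=
        setIntegral_mono_set (integrableOn_heavyProfile (by omega))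
          ((ae_restrict_mem measurableSet_Ioi).mono fun y hy => heavyProfile_nonneg (le_of_lt hy))
          (Ioi_subset_Ioi zero_le_one).eventuallyLE

end HeavyProfile

lemma setIntegral_norm_ge_fun_norm_addHaar {E F : Type*} [NormedAddCommGroup E]
    [NormedSpace ℝ E] [Nontrivial E] [FiniteDimensional ℝ E] [MeasurableSpace E] [BorelSpace E]
    (μ : Measure E) [μ.IsAddHaarMeasure] [NormedAddCommGroup F] [NormedSpace ℝ F]
    (f : ℝ → F) {R : ℝ} (hR : 0 ≤ R) :
    ∫ x in {x : E | R ≤ ‖x‖}, f ‖x‖ ∂μ =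
      Module.finrank ℝ E • μ.real (ball 0 1) •
        ∫ y in Ioi R, y ^ (Module.finrank ℝ E - 1) • f y := by
  have hset : (Ici R ∩ Ioi 0 : Set ℝ) =ᵐ[volume] Ioi R := by
    simpa [Ioi_inter_Ioi, hR] using (Ioi_ae_eq_Ici (a := R)).symm.inter (ae_eq_refl (Ioi 0))
  rw [← integral_indicator (measurableSet_le measurable_const measurable_norm)]
  have hind : ∀ x : E,
      {x : E | R ≤ ‖x‖}.indicator (fun x => f ‖x‖) x = (Ici R).indicator f ‖x‖ :=
    fun x => by by_cases h : R ≤ ‖x‖ <;> simp [h]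
  simp_rw [hind]
  rw [integral_fun_norm_addHaar μ, ← setIntegral_congr_set hset, ← Measure.restrict_restrict
    measurableSet_Ici, ← integral_indicator measurableSet_Ici]
  simp_rw [← indicator_const_smul_apply]
  rfl

lemma measureReal_withDensity_ofReal {α : Type*} [MeasurableSpace α] {μ : Measure α}
    {f : α → ℝ} (hf : Measurable f) (hf0 : 0 ≤ f) {s : Set α} (hs : MeasurableSet s) :
    (μ.withDensity fun x => ENNReal.ofReal (f x)).real s = ∫ x in s, f x ∂μ := by
  rw [measureReal_def, withDensity_apply _ hs,
    integral_eq_lintegral_of_nonneg_ae (ae_of_all _ hf0) hf.aestronglyMeasurable]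

section HeavyMeasure

variable {m : ℕ} {c : ℝ}

lemma heavyMeasure_real_norm_ge (hm : 1 ≤ m) (hc : 0 ≤ c) {R : ℝ} (hR : 0 ≤ R) :
    (heavyMeasure m c).real {x | R ≤ ‖x‖} =
      c * unitSphereArea m * ∫ y in Ioi R, heavyProfile m y := by
  have : Nontrivial (EuclideanSpace ℝ (Fin m)) :=
    Module.nontrivial_of_finrank_pos (R := ℝ) (by rw [finrank_euclideanSpace_fin]; omega)
  rw [heavyMeasure, measureReal_withDensity_ofReal (by unfold heavyDensity; fun_prop)
    (fun x => by unfold heavyDensity; positivity)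
    (measurableSet_le measurable_const measurable_norm)]
  have := setIntegral_norm_ge_fun_norm_addHaar (volume : Measure (EuclideanSpace ℝ (Fin m)))
    (fun r : ℝ => c / (1 + r ^ (m + 1))) hR
  rw [finrank_euclideanSpace_fin] at this
  simp only [heavyDensity, this, unitSphereArea, unitBallVol, heavyProfile, smul_eq_mul,
    nsmul_eq_mul, measureReal_def, mul_div_left_comm _ c, integral_const_mul]
  ring

lemma heavyMeasure_scale_mul_integral_heavyProfile (hm : 1 ≤ m) (hc : 0 ≤ c)
    [IsProbabilityMeasure (heavyMeasure m c)] :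
    c * unitSphereArea m * ∫ y in Ioi 0, heavyProfile m y = 1 := by
  rw [← heavyMeasure_real_norm_ge hm hc le_rfl]
  simp

lemma heavyMeasure_scale_mem_Icc (hm : 3 ≤ m) (hc : 0 ≤ c)
    [IsProbabilityMeasure (heavyMeasure m c)] :
    c * unitSphereArea m ∈ Icc (3 / 4) (5 / 4) := by
  have h := heavyMeasure_scale_mul_integral_heavyProfile (m := m) (by omega) hc
  have hlow := le_integral_heavyProfile hm
  have hhigh := integral_heavyProfile_le hm
  constructor <;> nlinarith

lemma unitSphereArea_nonneg (m : ℕ) : 0 ≤ unitSphereArea m :=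
  mul_nonneg m.cast_nonneg ENNReal.toReal_nonneg

lemma heavyMeasure_real_norm_ge_le (hm : 1 ≤ m) (hc : 0 ≤ c) {R : ℝ} (hR : 0 < R) :
    (heavyMeasure m c).real {x | R ≤ ‖x‖} ≤ c * unitSphereArea m / R := by
  rw [heavyMeasure_real_norm_ge hm hc hR.le, div_eq_mul_inv]
  exact mul_le_mul_of_nonneg_left (setIntegral_heavyProfile_Ioi_le hm hR)
    (mul_nonneg hc (unitSphereArea_nonneg m))

lemma le_heavyMeasure_real_norm_ge (hm : 3 ≤ m) (hc : 0 ≤ c) {R : ℝ} (hR : 1 ≤ R) :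
    4 / 5 * (c * unitSphereArea m / R) ≤ (heavyMeasure m c).real {x | R ≤ ‖x‖} := by
  rw [heavyMeasure_real_norm_ge (by omega) hc (zero_le_one.trans hR)]
  calc 4 / 5 * (c * unitSphereArea m / R) = c * unitSphereArea m * (4 / 5 * R⁻¹) := by ring
    _ ≤ _ := mul_le_mul_of_nonneg_left (le_setIntegral_heavyProfile_Ioi hm hR)
      (mul_nonneg hc (unitSphereArea_nonneg m))

lemma heavyMeasure_real_norm_ge_sub_one_le (hm : 1 ≤ m) (hc : 0 ≤ c) {R : ℝ}
    (hR : 5 ≤ R) :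
    (heavyMeasure m c).real {x | R - 1 ≤ ‖x‖} ≤ 5 / 4 * (c * unitSphereArea m / R) := by
  have hσ : 0 ≤ c * unitSphereArea m := mul_nonneg hc (unitSphereArea_nonneg m)
  calc (heavyMeasure m c).real {x | R - 1 ≤ ‖x‖} ≤ c * unitSphereArea m / (R - 1) :=
        heavyMeasure_real_norm_ge_le hm hc (by linarith)
    _ ≤ c * unitSphereArea m / (4 / 5 * R) :=
        div_le_div_of_nonneg_left hσ (by linarith) (by linarith)
    _ = 5 / 4 * (c * unitSphereArea m / R) := by ring

lemma heavyMeasure_expected_counts_bounds (hm : 3 ≤ m) (hc : 0 ≤ c)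
    [IsProbabilityMeasure (heavyMeasure m c)] {R a : ℝ} (hR : 5 ≤ R) (ha : 0 ≤ a) :
    c * unitSphereArea m * R * a * (heavyMeasure m c).real {x | R - 1 ≤ ‖x‖} ≤ 2 * a ∧
      9 / 20 * a ≤ c * unitSphereArea m * R * a * (heavyMeasure m c).real {x | R ≤ ‖x‖} ∧
      c * unitSphereArea m * R * a * (heavyMeasure m c).real {x | R ≤ ‖x‖} ≤
        25 / 16 * a := by
  obtain ⟨hσl, hσu⟩ := heavyMeasure_scale_mem_Icc hm hc
  have hp := heavyMeasure_real_norm_ge_sub_one_le (m := m) (by omega) hc hR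
  have hq := le_heavyMeasure_real_norm_ge hm hc (by linarith : 1 ≤ R)
  have hq' := heavyMeasure_real_norm_ge_le (m := m) (by omega) hc (by linarith : 0 < R)
  set σ := c * unitSphereArea m
  have hN : 0 ≤ σ * R * a := by positivity
  have hmean : σ * R * a * (σ / R) = σ ^ 2 * a := by field_simp
  have hσ2 : 9 / 16 * a ≤ σ ^ 2 * a ∧ σ ^ 2 * a ≤ 25 / 16 * a :=
    ⟨mul_le_mul_of_nonneg_right (by nlinarith) ha, mul_le_mul_of_nonneg_right (by nlinarith) ha⟩
  refine ⟨?_, ?_, ?_⟩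
  · linarith [mul_le_mul_of_nonneg_left hp hN]
  · linarith [mul_le_mul_of_nonneg_left hq hN]
  · linarith [mul_le_mul_of_nonneg_left hq' hN]

end HeavyMeasure

section Counting

lemma variance_indicator_one_le {Ω : Type*} [MeasurableSpace Ω] {μ : Measure Ω}
    [IsProbabilityMeasure μ] {s : Set Ω} (hs : MeasurableSet s) :
    variance (s.indicator 1) μ ≤ μ.real s := by
  calc variance (s.indicator 1) μ ≤ μ[s.indicator 1 ^ 2] :=
        variance_le_expectation_sq (measurable_one.indicator hs).aestronglyMeasurable
    _ = μ.real s := by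
        rw [← integral_indicator_one hs]
        congr 1
        ext ω
        by_cases h : ω ∈ s <;> simp [h]

variable {Ω E : Type*} [MeasurableSpace Ω] {μ : Measure Ω} [IsProbabilityMeasure μ]
  [MeasurableSpace E] {X : ℕ → Ω → E}

open Finset

lemma measureReal_abs_card_filter_sub_ge_le (hX : ∀ i, Measurable (X i))
    (hindep : Pairwise fun i j => IndepFun (X i) (X j) μ) {A : Set E} (hA : MeasurableSet A)
    {ν : Measure E} (hlaw : ∀ i, μ.map (X i) = ν) (n : ℕ) {t : ℝ} (ht : 0 < t) :
    μ.real {ω | t ≤ |(#{i ∈ range n | X i ω ∈ A} : ℝ) - n * ν.real A|} ≤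
      n * ν.real A / t ^ 2 := by
  have hp : ∀ i, μ.real (X i ⁻¹' A) = ν.real A := fun i => by
    rw [← hlaw i, map_measureReal_apply (hX i) hA]
  set p := ν.real A
  set Y : ℕ → Ω → ℝ := fun i => A.indicator 1 ∘ X i
  have hYpre : ∀ i, Y i = (X i ⁻¹' A).indicator 1 := fun i => rfl
  have hYL2 : ∀ i, MemLp (Y i) 2 μ := fun i => by
    rw [hYpre]; exact memLp_indicator_const 2 (hX i hA) 1 (Or.inr (measure_ne_top _ _))
  have hcount : ∀ ω, (#{i ∈ range n | X i ω ∈ A} : ℝ) = (∑ i ∈ range n, Y i) ω :=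
    fun ω => by simp [Y, Finset.sum_apply, Set.indicator_apply]
  have hmean : μ[∑ i ∈ range n, Y i] = n * p := by
    simp_rw [Finset.sum_apply]
    rw [integral_finsetSum _ fun i _ => (hYL2 i).integrable one_le_two]
    simp [hYpre, integral_indicator_one (hX _ hA), hp]
  have hvar : variance (∑ i ∈ range n, Y i) μ ≤ n * p := by
    rw [IndepFun.variance_sum (fun i _ => hYL2 i) fun i _ j _ hij =>
      (hindep hij).comp (measurable_one.indicator hA) (measurable_one.indicator hA)]
    calc ∑ i ∈ range n, variance (Y i) μ ≤ ∑ i ∈ range n, p := sum_le_sum fun i _ => by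
          rw [hYpre, ← hp i]; exact variance_indicator_one_le (hX i hA)
      _ = n * p := by simp
  have hcheb := meas_ge_le_variance_div_sq (memLp_finsetSum' (range n) fun i _ => hYL2 i) ht
  rw [hmean] at hcheb
  simp only [← hcount] at hcheb
  refine (ENNReal.toReal_le_of_le_ofReal ?_ hcheb).trans (by gcongr)
  exact div_nonneg (variance_nonneg _ _) (sq_nonneg t)

lemma le_measureReal_card_filter_lt_and_lt_card_filter (hX : ∀ i, Measurable (X i))
    (hindep : Pairwise fun i j => IndepFun (X i) (X j) μ) {A B : Set E} (hA : MeasurableSet A)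
    (hB : MeasurableSet B) {ν : Measure E} (hlaw : ∀ i, μ.map (X i) = ν) (n : ℕ)
    {s t u l : ℝ} (hs : 0 < s) (ht : 0 < t) (hu : n * ν.real A + s ≤ u)
    (hl : l + t ≤ n * ν.real B) :
    1 - (n * ν.real A / s ^ 2 + n * ν.real B / t ^ 2) ≤
      μ.real {ω | (#{i ∈ range n | X i ω ∈ A} : ℝ) < u ∧
        l < #{i ∈ range n | X i ω ∈ B}} := by
  set G := {ω | (#{i ∈ range n | X i ω ∈ A} : ℝ) < u ∧
    l < #{i ∈ range n | X i ω ∈ B}}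
  have hbad : Gᶜ ⊆ {ω | s ≤ |(#{i ∈ range n | X i ω ∈ A} : ℝ) - n * ν.real A|} ∪
      {ω | t ≤ |(#{i ∈ range n | X i ω ∈ B} : ℝ) - n * ν.real B|} := by
    intro ω hω
    simp only [G, Set.mem_compl_iff, Set.mem_ofPred_eq, not_and_or, not_lt] at hω
    simp only [Set.mem_union, Set.mem_ofPred_eq, le_abs]
    rcases hω with hω | hω
    · left; left; linarith
    · right; right; linarith
  have hcover : 1 ≤ μ.real G + μ.real Gᶜ := by
    simpa [Set.union_compl_self] using measureReal_union_le (μ := μ) G Gᶜ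
  have := (measureReal_mono hbad (measure_ne_top μ _)).trans (measureReal_union_le _ _)
  linarith [measureReal_abs_card_filter_sub_ge_le hX hindep hA hlaw n hs,
    measureReal_abs_card_filter_sub_ge_le hX hindep hB hlaw n ht]

end Counting

open Finset in
lemma countGE_eq_card_filter_mem {m : ℕ} {Ω : Type*}
    (X : ℕ → Ω → EuclideanSpace ℝ (Fin m)) (n : ℕ) (R : ℝ) (ω : Ω) :
    countGE X n R ω =
      #{i ∈ range n | X i ω ∈ {x : EuclideanSpace ℝ (Fin m) | R ≤ ‖x‖}} :=
  rfl

lemma one_third_lt_measureReal_countGE {m : ℕ} {c : ℝ} (hm : 3 ≤ m) (hc : 0 ≤ c)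
    [IsProbabilityMeasure (heavyMeasure m c)] {Ω : Type*} [MeasurableSpace Ω] {μ : Measure Ω}
    [IsProbabilityMeasure μ] {X : ℕ → Ω → EuclideanSpace ℝ (Fin m)}
    (hX : ∀ i, Measurable (X i))
    (hindep : Pairwise fun i j => IndepFun (X i) (X j) μ)
    (hlaw : ∀ i, μ.map (X i) = heavyMeasure m c) {n : ℕ} {R a : ℝ} (hR : 5 ≤ R)
    (ha : 100 ≤ a) (hn : (n : ℝ) = c * unitSphereArea m * R * a) :
    1 / 3 < μ.real {ω | (countGE X n (R - 1) ω : ℝ) < 3 * a ∧ a / 4 < countGE X n R ω} := by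
  obtain ⟨hP, hQ, hQ'⟩ := heavyMeasure_expected_counts_bounds hm hc hR (by linarith : 0 ≤ a)
  rw [← hn] at hP hQ hQ'
  have hA : ∀ r : ℝ, MeasurableSet {x : EuclideanSpace ℝ (Fin m) | r ≤ ‖x‖} :=
    fun r => measurableSet_le measurable_const measurable_norm
  -- Deviations `a` and `a/5` fit into the margins `3a - 2a` and `9a/20 - a/4`.
  have key := le_measureReal_card_filter_lt_and_lt_card_filter hX hindep (hA (R - 1)) (hA R)
    hlaw n (s := a) (t := a / 5) (u := 3 * a) (l := a / 4) (by positivity) (by positivity)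
    (by linarith) (by linarith)
  have herr₁ : n * (heavyMeasure m c).real {x | R - 1 ≤ ‖x‖} / a ^ 2 ≤ 1 / 50 := by
    rw [div_le_iff₀ (by positivity)]; nlinarith
  have herr₂ : n * (heavyMeasure m c).real {x | R ≤ ‖x‖} / (a / 5) ^ 2 ≤ 2 / 5 := by
    rw [div_le_iff₀ (by positivity)]; nlinarith
  simp only [countGE_eq_card_filter_mem]
  exact lt_of_lt_of_le (by linarith) key

/-- For i.i.d. samples from the heavy-tailed density `f_m` (`m ≥ 3`) and
`R_n = n^{2/m}/(c_m s_{m−1})`, for all sufficiently large `n`,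
`P(A_n^{[R_n−1,∞)} < 3 n^{1−2/m} and A_n^{[R_n,∞)} > (1/4) n^{1−2/m}) > 1/3`. -/
theorem prob_point_counts_gt_third {m : ℕ} (hm : 3 ≤ m) {c : ℝ} (hc : 0 < c)
    (hprob : IsProbabilityMeasure (heavyMeasure m c))
    {Ω : Type*} [MeasureSpace Ω] [IsProbabilityMeasure (ℙ : Measure Ω)]
    (X : ℕ → Ω → EuclideanSpace ℝ (Fin m)) (hmeas : ∀ i, Measurable (X i))
    (hindep : iIndepFun X ℙ)
    (hlaw : ∀ i, Measure.map (X i) ℙ = heavyMeasure m c)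
    (R : ℕ → ℝ) (hR : ∀ n, R n = (n : ℝ) ^ ((2 : ℝ) / m) / (c * unitSphereArea m)) :
    ∀ᶠ n : ℕ in atTop,
      (1 : ℝ) / 3 < (ℙ {ω | (countGE X n (R n - 1) ω : ℝ) < 3 * (n : ℝ) ^ (1 - (2 : ℝ) / m)
        ∧ (n : ℝ) ^ (1 - (2 : ℝ) / m) / 4 < (countGE X n (R n) ω : ℝ)}).toReal := by
  have hσ : 0 < c * unitSphereArea m := by linarith [(heavyMeasure_scale_mem_Icc hm hc.le).1]
  have hexp : 0 < 1 - (2 : ℝ) / m := by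
    rw [sub_pos, div_lt_one (by positivity)]; exact_mod_cast (by omega : 2 < m)
  have hRlim : Tendsto R atTop atTop := by
    rw [funext hR]
    exact ((tendsto_rpow_atTop (by positivity)).comp
      tendsto_natCast_atTop_atTop).atTop_div_const hσ
  have halim := (tendsto_rpow_atTop hexp).comp tendsto_natCast_atTop_atTop
  filter_upwards [hRlim.eventually_ge_atTop 5, halim.eventually_ge_atTop 100,
    eventually_gt_atTop 0] with n hR5 ha hn
  refine one_third_lt_measureReal_countGE hm hc.le hmeas (fun i j hij => hindep.indepFun hij)
    hlaw hR5 ha ?_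
  simp only [hR n, Real.rpow_sub (Nat.cast_pos.2 hn), Real.rpow_one]
  field_simp [right_ne_zero_of_mul hσ.ne']
end

section
/- Let m ≥ 3 and let X_1, …, X_n be i.i.d. random vectors in ℝ^m with common density f_m. Set ω_n = n − ⌈(1/4) n^{1−2/m}⌉. Then for all sufficiently large n, P( d_{ω_n}(X_1, …, X_n) > 1 ) ≥ 1/4; in particular d_{ω_n} does not converge to 0 in probability, so d_{ω_n} is not an admissible bandwidth. -/
/-!
A point of norm larger than `t ≍ n^{2/m}` has probability `≳ n^{-2/m}`, so by Chebyshev more than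
`n^{1-2/m}/4` of the `n` samples are that far out with high probability. Near such a point the
density is `O(t^{-(m+1)})`, so a union bound over the `n²` pairs shows that with high probability
none of them has another sample within distance `2`. These far points are then isolated vertices
of the Rips graph at every scale `r < 2`, leaving more than `n - ω_n` components, so
`d_{ω_n} ≥ 2`.
-/

open MeasureTheory ProbabilityTheory Filter Metric
open scoped Topology ENNReal Finset

def ripsGraph {n m : ℕ} (x : Fin n → EuclideanSpace ℝ (Fin m)) (r : ℝ) :
    SimpleGraph (Fin n) where
  Adj i j := i ≠ j ∧ dist (x i) (x j) ≤ r
  symm := ⟨fun i j h => ⟨h.1.symm, by rw [dist_comm]; exact h.2⟩⟩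
  loopless := ⟨fun i h => h.1 rfl⟩

noncomputable def ripsDeath {n m : ℕ} (x : Fin n → EuclideanSpace ℝ (Fin m)) (k : ℕ) : ℝ :=
  sInf {r : ℝ | 0 ≤ r ∧ Nat.card (ripsGraph x r).ConnectedComponent ≤ n - k}

theorem SimpleGraph.card_le_card_connectedComponent_of_forall_not_adj {V : Type*} [Finite V]
    {G : SimpleGraph V} (s : Finset V) (hs : ∀ v ∈ s, ∀ w, ¬ G.Adj v w) :
    s.card ≤ Nat.card G.ConnectedComponent := by
  have hinj : Function.Injective fun v : s => G.connectedComponentMk v := by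
    rintro ⟨v, hv⟩ ⟨w, hw⟩ hvw
    obtain ⟨p⟩ := SimpleGraph.ConnectedComponent.exact hvw
    cases p with
    | nil => rfl
    | cons h _ => exact absurd h (hs v hv _)
  simpa using Nat.card_le_card_of_injective _ hinj

theorem preconnected_ripsGraph_diam {n m : ℕ} (x : Fin n → EuclideanSpace ℝ (Fin m)) :
    (ripsGraph x (diam (Set.range x))).Preconnected := by
  intro i j
  by_cases hij : i = j
  · exact hij ▸ .rfl
  · exact SimpleGraph.Adj.reachable
      ⟨hij, dist_le_diam_of_mem (Set.finite_range x).isBounded ⟨i, rfl⟩ ⟨j, rfl⟩⟩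

theorem le_ripsDeath_of_isolated {n m : ℕ} {x : Fin n → EuclideanSpace ℝ (Fin m)} {k : ℕ}
    {s : ℝ} {I : Finset (Fin n)} (hk : k < n) (hI : n - k < I.card)
    (hiso : ∀ i ∈ I, ∀ j ≠ i, s ≤ dist (x i) (x j)) : s ≤ ripsDeath x k := by
  refine le_csInf ⟨diam (Set.range x), diam_nonneg, ?_⟩ ?_
  · have := (preconnected_ripsGraph_diam x).subsingleton_connectedComponent
    have := Finite.card_le_one_iff_subsingleton.mpr this
    omega
  · rintro r ⟨-, hr⟩
    by_contra! hrs
    have := (ripsGraph x r).card_le_card_connectedComponent_of_forall_not_adj I fun i hi j hij =>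
      (hrs.trans_le (hiso i hi j (Ne.symm hij.1))).not_ge hij.2
    omega

section HeavyTail

variable {m : ℕ} {c : ℝ}

theorem ofReal_mul_volume_le_heavyMeasure {s : Set (EuclideanSpace ℝ (Fin m))}
    (hs : MeasurableSet s) {a : ℝ} (ha : ∀ x ∈ s, a ≤ heavyDensity m c x) :
    ENNReal.ofReal a * volume s ≤ heavyMeasure m c s := by
  rw [heavyMeasure, withDensity_apply _ hs, ← setLIntegral_const]
  exact setLIntegral_mono' hs fun x hx => ENNReal.ofReal_le_ofReal (ha x hx)

theorem heavyMeasure_le_ofReal_mul_volume {s : Set (EuclideanSpace ℝ (Fin m))}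
    (hs : MeasurableSet s) {a : ℝ} (ha : ∀ x ∈ s, heavyDensity m c x ≤ a) :
    heavyMeasure m c s ≤ ENNReal.ofReal a * volume s := by
  rw [heavyMeasure, withDensity_apply _ hs, ← setLIntegral_const]
  exact setLIntegral_mono' hs fun x hx => ENNReal.ofReal_le_ofReal (ha x hx)

theorem exists_heavyMeasure_norm_gt_ge (hm : m ≠ 0) (hc : 0 < c) :
    ∃ b > 0, ∀ t ≥ 1, ENNReal.ofReal (b / t) ≤ heavyMeasure m c {x | t < ‖x‖} := by
  set V := volume.real (ball (0 : EuclideanSpace ℝ (Fin m)) 1)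
  have hV : 0 < V := ENNReal.toReal_pos (measure_ball_pos _ _ one_pos).ne' measure_ball_lt_top.ne
  have h2m : 0 < (2 : ℝ) ^ m - 1 := by linarith [one_lt_pow₀ (one_lt_two (α := ℝ)) hm]
  refine ⟨c * (2 ^ m - 1) * V / 2 ^ (m + 2), by positivity, fun t ht => ?_⟩
  have ht0 : 0 < t := by linarith
  set A := closedBall (0 : EuclideanSpace ℝ (Fin m)) (2 * t) \ closedBall 0 t
  have hA : MeasurableSet A := measurableSet_closedBall.diff measurableSet_closedBall
  have hvolA : volume A = ENNReal.ofReal (t ^ m * (2 ^ m - 1) * V) := by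
    rw [← ofReal_measureReal
        (measure_ne_top_of_subset Set.sdiff_subset measure_closedBall_lt_top.ne),
      measureReal_sdiff (closedBall_subset_closedBall (by linarith)) measurableSet_closedBall
        measure_closedBall_lt_top.ne,
      Measure.addHaar_real_closedBall _ _ (by linarith),
      Measure.addHaar_real_closedBall _ _ ht0.le, finrank_euclideanSpace_fin]
    congr 1
    simp only [V]
    ring
  have hdens : ∀ x ∈ A, c / (2 * (2 * t) ^ (m + 1)) ≤ heavyDensity m c x := by
    rintro x ⟨hx, -⟩
    rw [mem_closedBall_zero_iff] at hx
    have h1 : (1 : ℝ) ≤ (2 * t) ^ (m + 1) := one_le_pow₀ (by linarith)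
    have h2 : ‖x‖ ^ (m + 1) ≤ (2 * t) ^ (m + 1) := by gcongr
    exact div_le_div_of_nonneg_left hc.le (by positivity) (by linarith)
  calc ENNReal.ofReal (c * (2 ^ m - 1) * V / 2 ^ (m + 2) / t)
      = ENNReal.ofReal (c / (2 * (2 * t) ^ (m + 1))) * volume A := by
        rw [hvolA, ← ENNReal.ofReal_mul (by positivity)]
        congr 1
        field_simp
        ring
    _ ≤ heavyMeasure m c A := ofReal_mul_volume_le_heavyMeasure hA hdens
    _ ≤ heavyMeasure m c {x | t < ‖x‖} :=
        measure_mono fun x hx => by simpa using hx.2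

theorem exists_heavyMeasure_ball_le (hc : 0 ≤ c) (r : ℝ) :
    ∃ B ≥ 0, ∀ t > 0, 2 * r ≤ t → ∀ x : EuclideanSpace ℝ (Fin m), t < ‖x‖ →
      heavyMeasure m c (ball x r) ≤ ENNReal.ofReal (B / t ^ (m + 1)) := by
  set W := volume.real (ball (0 : EuclideanSpace ℝ (Fin m)) r)
  refine ⟨c * 2 ^ (m + 1) * W, by positivity, fun t ht htr x hx => ?_⟩
  have hdens : ∀ y ∈ ball x r, heavyDensity m c y ≤ c * 2 ^ (m + 1) / t ^ (m + 1) := by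
    intro y hy
    have hy : t / 2 ≤ ‖y‖ := by
      have := norm_sub_norm_le x y
      rw [mem_ball, dist_eq_norm'] at hy
      linarith
    calc heavyDensity m c y ≤ c / (t / 2) ^ (m + 1) :=
          div_le_div_of_nonneg_left hc (by positivity)
            (by linarith [pow_le_pow_left₀ (by positivity) hy (m + 1)])
      _ = c * 2 ^ (m + 1) / t ^ (m + 1) := by rw [div_pow, div_div_eq_mul_div]
  calc heavyMeasure m c (ball x r)
      ≤ ENNReal.ofReal (c * 2 ^ (m + 1) / t ^ (m + 1)) * volume (ball x r) :=
        heavyMeasure_le_ofReal_mul_volume measurableSet_ball hdens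
    _ = ENNReal.ofReal (c * 2 ^ (m + 1) * W / t ^ (m + 1)) := by
        rw [Measure.addHaar_ball_center, ← ofReal_measureReal, ← ENNReal.ofReal_mul (by positivity)]
        congr 1
        simp only [W]
        ring

end HeavyTail

section Sampling

variable {Ω : Type*} [MeasurableSpace Ω] {μ : Measure Ω} [IsProbabilityMeasure μ]
  {ι : Type*} [Fintype ι] {E : Type*} [MeasurableSpace E] {X : ι → Ω → E} {ν : Measure E}

theorem variance_le_integral_of_mem_Icc {Y : Ω → ℝ} (hY : Measurable Y)
    (h01 : ∀ ω, Y ω ∈ Set.Icc (0 : ℝ) 1) : variance Y μ ≤ μ[Y] := by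
  have hint : Integrable Y μ :=
    .of_bound hY.aestronglyMeasurable 1 (ae_of_all _ fun ω => by
      rw [Real.norm_of_nonneg (h01 ω).1]; exact (h01 ω).2)
  calc variance Y μ ≤ μ[Y ^ 2] := variance_le_expectation_sq hY.aestronglyMeasurable
    _ ≤ μ[Y] := integral_mono_of_nonneg (f := Y ^ 2) (ae_of_all _ fun ω => sq_nonneg (Y ω)) hint
        (ae_of_all _ fun ω => by
          simpa [sq] using mul_le_of_le_one_right (h01 ω).1 (h01 ω).2)

theorem meas_sum_le_le_four_div_mean {Y : ι → Ω → ℝ} (hY : ∀ i, Measurable (Y i))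
    (hindep : Pairwise fun i j => IndepFun (Y i) (Y j) μ)
    (h01 : ∀ i ω, Y i ω ∈ Set.Icc (0 : ℝ) 1) {k : ℝ} (hmean : 0 < ∑ i, μ[Y i])
    (hk : k ≤ (∑ i, μ[Y i]) / 2) :
    μ {ω | ∑ i, Y i ω ≤ k} ≤ ENNReal.ofReal (4 / ∑ i, μ[Y i]) := by
  set a := ∑ i, μ[Y i]
  have hL2 : ∀ i, MemLp (Y i) 2 μ := fun i =>
    .of_bound (hY i).aestronglyMeasurable 1 (ae_of_all _ fun ω => by
      rw [Real.norm_of_nonneg (h01 i ω).1]; exact (h01 i ω).2)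
  have hsum : ∀ ω, (∑ i, Y i) ω = ∑ i, Y i ω := fun ω => Finset.sum_apply ω _ Y
  have hmean_sum : μ[∑ i, Y i] = a := by
    simp only [Finset.sum_apply]
    exact integral_finsetSum _ fun i _ => (hL2 i).integrable one_le_two
  have hvar : variance (∑ i, Y i) μ ≤ a := by
    rw [IndepFun.variance_sum (fun i _ => hL2 i) fun i _ j _ hij => hindep hij]
    exact Finset.sum_le_sum fun i _ => variance_le_integral_of_mem_Icc (hY i) (h01 i)
  have hdev : {ω | ∑ i, Y i ω ≤ k} ⊆ {ω | a / 2 ≤ |(∑ i, Y i) ω - μ[∑ i, Y i]|} := by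
    intro ω (hω : _ ≤ k)
    rw [Set.mem_ofPred_eq, hsum, hmean_sum, abs_sub_comm]
    exact le_abs.mpr (.inl (by linarith))
  calc μ {ω | ∑ i, Y i ω ≤ k}
      ≤ ENNReal.ofReal (variance (∑ i, Y i) μ / (a / 2) ^ 2) :=
        (measure_mono hdev).trans (meas_ge_le_variance_div_sq (memLp_finsetSum' _ fun i _ => hL2 i)
          (half_pos hmean))
    _ ≤ ENNReal.ofReal (4 / a) := by
        refine ENNReal.ofReal_le_ofReal ?_
        calc variance (∑ i, Y i) μ / (a / 2) ^ 2 ≤ a / (a / 2) ^ 2 := by gcongr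
          _ = 4 / a := by field_simp; ring

open scoped Classical in
theorem meas_card_mem_le_le_four_div (hX : ∀ i, Measurable (X i))
    (hindep : Pairwise fun i j => IndepFun (X i) (X j) μ) (hlaw : ∀ i, μ.map (X i) = ν)
    {T : Set E} (hT : MeasurableSet T) {k : ℕ} (hpos : 0 < Fintype.card ι * ν.real T)
    (hk : (k : ℝ) ≤ Fintype.card ι * ν.real T / 2) :
    μ {ω | #{i | X i ω ∈ T} ≤ k} ≤ ENNReal.ofReal (4 / (Fintype.card ι * ν.real T)) := by
  set Y : ι → Ω → ℝ := fun i => T.indicator 1 ∘ X i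
  have hY : ∀ i, Measurable (Y i) := fun i => (measurable_one.indicator hT).comp (hX i)
  have hmean : ∀ i, μ[Y i] = ν.real T := fun i => by
    rw [← integral_indicator_one hT, ← hlaw i,
      integral_map (hX i).aemeasurable (measurable_one.indicator hT).aestronglyMeasurable]
    rfl
  have hcount : ∀ ω, ∑ i, Y i ω = #{i | X i ω ∈ T} := fun ω => by
    simp [Y, Set.indicator_apply, Finset.sum_boole]
  have hsum : ∑ i, μ[Y i] = Fintype.card ι * ν.real T := by simp [hmean]
  have := meas_sum_le_le_four_div_mean hY
    (fun i j hij => (hindep hij).comp (measurable_one.indicator hT) (measurable_one.indicator hT))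
    (fun i ω => by by_cases h : X i ω ∈ T <;> simp [Y, h]) (hsum ▸ hpos) (hsum ▸ hk)
  simpa only [hcount, hsum, Nat.cast_le] using this

theorem meas_exists_close_pair_le [PseudoMetricSpace E] [OpensMeasurableSpace E]
    [SecondCountableTopology E] [IsProbabilityMeasure ν] (hX : ∀ i, Measurable (X i))
    (hindep : Pairwise fun i j => IndepFun (X i) (X j) μ) (hlaw : ∀ i, μ.map (X i) = ν)
    {T : Set E} (hT : MeasurableSet T) {r : ℝ} {q : ℝ≥0∞} (hq : ∀ x ∈ T, ν (ball x r) ≤ q) :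
    μ {ω | ∃ i j, i ≠ j ∧ X i ω ∈ T ∧ dist (X i ω) (X j ω) < r} ≤
      Fintype.card ι ^ 2 * q := by
  set S : Set (E × E) := {p | p.1 ∈ T ∧ dist p.1 p.2 < r}
  have hS : MeasurableSet S :=
    (measurable_fst hT).inter (measurableSet_lt measurable_dist measurable_const)
  have hS_prod : (ν.prod ν) S ≤ q := by
    rw [Measure.prod_apply hS]
    calc ∫⁻ x, ν (Prod.mk x ⁻¹' S) ∂ν ≤ ∫⁻ _, q ∂ν := lintegral_mono fun x => ?_
      _ = q := by simp
    by_cases hx : x ∈ T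
    · exact (measure_mono fun y hy => mem_ball'.mpr hy.2).trans (hq x hx)
    · simp [S, hx]
  have hpair : ∀ i j, μ {ω | i ≠ j ∧ X i ω ∈ T ∧ dist (X i ω) (X j ω) < r} ≤ q := by
    intro i j
    by_cases hij : i = j
    · simp [hij]
    have hmap : μ.map (fun ω => (X i ω, X j ω)) = ν.prod ν := by
      rw [(indepFun_iff_map_prod_eq_prod_map_map (hX i).aemeasurable (hX j).aemeasurable).mp
        (hindep hij), hlaw, hlaw]
    have hpre : {ω | i ≠ j ∧ X i ω ∈ T ∧ dist (X i ω) (X j ω) < r} =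
        (fun ω => (X i ω, X j ω)) ⁻¹' S := by
      ext ω; simp [S, hij]
    rw [hpre, ← Measure.map_apply ((hX i).prodMk (hX j)) hS, hmap]
    exact hS_prod
  calc μ {ω | ∃ i j, i ≠ j ∧ X i ω ∈ T ∧ dist (X i ω) (X j ω) < r}
      = μ (⋃ i, ⋃ j, {ω | i ≠ j ∧ X i ω ∈ T ∧ dist (X i ω) (X j ω) < r}) := by
        simp only [Set.ofPred_exists]
    _ ≤ ∑ i, ∑ j, μ {ω | i ≠ j ∧ X i ω ∈ T ∧ dist (X i ω) (X j ω) < r} :=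
        (measure_iUnion_fintype_le _ _).trans
          (Finset.sum_le_sum fun i _ => measure_iUnion_fintype_le _ _)
    _ ≤ ∑ _i : ι, ∑ _j : ι, q := by gcongr with i _ j _; exact hpair i j
    _ = Fintype.card ι ^ 2 * q := by simp [sq, mul_assoc]

end Sampling

section RipsDeath

variable {Ω : Type*} [MeasurableSpace Ω] {μ : Measure Ω} [IsProbabilityMeasure μ]

theorem one_le_measureReal_add_measureReal_compl (s : Set Ω) :
    1 ≤ μ.real s + μ.real sᶜ := by
  have h := measure_univ_le_add_compl (μ := μ) s
  rw [measure_univ] at h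
  simpa [measureReal_def, ENNReal.toReal_add] using
    ENNReal.toReal_mono (by finiteness) h

open scoped Classical in
theorem one_sub_le_measureReal_le_ripsDeath {n m : ℕ}
    {X : Fin n → Ω → EuclideanSpace ℝ (Fin m)} {ν : Measure (EuclideanSpace ℝ (Fin m))}
    [IsProbabilityMeasure ν] (hX : ∀ i, Measurable (X i))
    (hindep : Pairwise fun i j => IndepFun (X i) (X j) μ) (hlaw : ∀ i, μ.map (X i) = ν)
    {T : Set (EuclideanSpace ℝ (Fin m))} (hT : MeasurableSet T) {r q : ℝ} (hq0 : 0 ≤ q)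
    (hq : ∀ x ∈ T, ν (ball x r) ≤ ENNReal.ofReal q) {k : ℕ} (hk1 : 1 ≤ k)
    (hk : (k : ℝ) ≤ n * ν.real T / 2) :
    1 - 4 / (n * ν.real T) - n ^ 2 * q ≤
      μ.real {ω | r ≤ ripsDeath (fun i => X i ω) (n - k)} := by
  have hpos : 0 < n * ν.real T := by
    have : (1 : ℝ) ≤ k := by exact_mod_cast hk1
    linarith
  set A := {ω | #{i | X i ω ∈ T} ≤ k}
  set B := {ω | ∃ i j, i ≠ j ∧ X i ω ∈ T ∧ dist (X i ω) (X j ω) < r}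
  have hA : μ.real A ≤ 4 / (n * ν.real T) :=
    ENNReal.toReal_le_of_le_ofReal (by positivity) <| by
      simpa using meas_card_mem_le_le_four_div hX hindep hlaw hT
        (by simpa using hpos) (by simpa using hk)
  have hB : μ.real B ≤ n ^ 2 * q :=
    ENNReal.toReal_le_of_le_ofReal (by positivity) <| by
      simpa [ENNReal.ofReal_mul, ENNReal.ofReal_pow] using
        meas_exists_close_pair_le hX hindep hlaw hT hq
  have hgood : (A ∪ B)ᶜ ⊆ {ω | r ≤ ripsDeath (fun i => X i ω) (n - k)} := by
    intro ω hω
    obtain ⟨hωA, hωB⟩ : ¬ #{i | X i ω ∈ T} ≤ k ∧ ω ∉ B := by simpa [A] using hω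
    have hcard : #{i | X i ω ∈ T} ≤ n := (Finset.card_filter_le _ _).trans (by simp)
    refine le_ripsDeath_of_isolated (I := {i | X i ω ∈ T}) (by omega) (by omega)
      fun i hi j hji => ?_
    by_contra! hclose
    exact hωB ⟨i, j, hji.symm, (Finset.mem_filter.mp hi).2, hclose⟩
  -- `{ω | r ≤ ripsDeath …}` is not known to be measurable, so it is bounded below through
  -- subadditivity rather than through `prob_compl_eq_one_sub`.
  linarith [one_le_measureReal_add_measureReal_compl (μ := μ) (A ∪ B),
    measureReal_union_le (μ := μ) A B, measureReal_mono (μ := μ) hgood]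

theorem three_quarters_le_measureReal_le_ripsDeath {n m : ℕ}
    {X : Fin n → Ω → EuclideanSpace ℝ (Fin m)} {ν : Measure (EuclideanSpace ℝ (Fin m))}
    [IsProbabilityMeasure ν] (hX : ∀ i, Measurable (X i))
    (hindep : Pairwise fun i j => IndepFun (X i) (X j) μ) (hlaw : ∀ i, μ.map (X i) = ν)
    {T : Set (EuclideanSpace ℝ (Fin m))} (hT : MeasurableSet T) {p q r : ℝ}
    (hp : ENNReal.ofReal p ≤ ν T) (hq0 : 0 ≤ q) (hq : ∀ x ∈ T, ν (ball x r) ≤ ENNReal.ofReal q)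
    (hnp : 32 ≤ n * p) (hnq : n ^ 2 * q ≤ 1 / 8) :
    3 / 4 ≤ μ.real {ω | r ≤ ripsDeath (fun i => X i ω) (n - ⌈n * p / 4⌉₊)} := by
  have hpT : n * p ≤ n * ν.real T := by
    gcongr
    exact (ENNReal.ofReal_le_iff_le_toReal (measure_ne_top ν T)).mp hp
  have hk := Nat.ceil_lt_add_one (show (0 : ℝ) ≤ n * p / 4 by linarith)
  have hmain := one_sub_le_measureReal_le_ripsDeath (k := ⌈n * p / 4⌉₊) hX hindep hlaw hT hq0
    hq (Nat.one_le_ceil_iff.mpr (by linarith)) (by linarith)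
  have hcount : 4 / (n * ν.real T) ≤ 1 / 8 := by
    rw [div_le_iff₀ (by linarith)]
    linarith
  linarith

theorem not_tendstoInMeasure_zero_of_le_measureReal {ι : Type*} {l : Filter ι} [l.NeBot]
    {f : ι → Ω → ℝ} {δ ε : ℝ} (hδ : 0 < δ) (hε : 0 < ε)
    (h : ∀ᶠ i in l, ε ≤ μ.real {ω | δ < f i ω}) : ¬ TendstoInMeasure μ f l fun _ => 0 := by
  intro hf
  have hsmall := (tendstoInMeasure_iff_measureReal_dist.mp hf δ hδ).eventually_lt_const hε
  obtain ⟨i, hlarge, hsmall⟩ := (h.and hsmall).exists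
  have hsub : {ω | δ < f i ω} ⊆ {ω | δ ≤ dist (f i ω) 0} := fun ω (hω : δ < f i ω) => by
    simpa [Real.dist_eq] using hω.le.trans (le_abs_self _)
  linarith [measureReal_mono (μ := μ) hsub]

theorem eventually_three_quarters_le_measureReal_two_le_ripsDeath {m : ℕ} (hm : 3 ≤ m) {c : ℝ}
    (hc : 0 < c) [IsProbabilityMeasure (heavyMeasure m c)]
    (X : ℕ → Ω → EuclideanSpace ℝ (Fin m)) (hX : ∀ i, Measurable (X i))
    (hindep : iIndepFun X μ) (hlaw : ∀ i, μ.map (X i) = heavyMeasure m c) :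
    ∀ᶠ n : ℕ in atTop, 3 / 4 ≤ μ.real {ω | 2 ≤ ripsDeath (fun i : Fin n => X i ω)
      (n - ⌈(n : ℝ) ^ (1 - (2 : ℝ) / m) / 4⌉₊)} := by
  obtain ⟨b, hb, htail⟩ := exists_heavyMeasure_norm_gt_ge (by omega : m ≠ 0) hc
  obtain ⟨B, hB, hball⟩ := exists_heavyMeasure_ball_le (m := m) hc.le 2
  set e : ℝ := 2 / m
  have hm0 : (m : ℝ) ≠ 0 := by positivity
  have he : 0 < e := by positivity
  have he1 : 0 < 1 - e := by
    rw [sub_pos, div_lt_one (by positivity)]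
    exact_mod_cast hm
  -- At scale `t = b n^{2/m}` about `n b / t = n^{1-2/m}` samples lie beyond `t`, while the bound
  -- on close pairs among them is `n² B / t^{m+1} = B / (b^m t) → 0`.
  have hscale : Tendsto (fun n : ℕ => b * (n : ℝ) ^ e) atTop atTop :=
    ((tendsto_rpow_atTop he).comp tendsto_natCast_atTop_atTop).const_mul_atTop hb
  have hcount : Tendsto (fun n : ℕ => (n : ℝ) ^ (1 - e)) atTop atTop :=
    (tendsto_rpow_atTop he1).comp tendsto_natCast_atTop_atTop
  filter_upwards [hscale.eventually_ge_atTop 4, hscale.eventually_ge_atTop (8 * B / b ^ m),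
    hcount.eventually_ge_atTop 32, eventually_gt_atTop 0] with n ht4 htB hn32 hn
  set t := b * (n : ℝ) ^ e
  have hn : (0 : ℝ) < n := by exact_mod_cast hn
  have ht : 0 < t := by linarith
  have hnp : n * (b / t) = (n : ℝ) ^ (1 - e) := by
    simp only [t]
    rw [Real.rpow_sub hn, Real.rpow_one]
    field_simp
  have htm : t ^ m = b ^ m * n ^ 2 := by
    rw [mul_pow, ← Real.rpow_mul_natCast hn.le, div_mul_cancel₀ _ hm0]
    norm_cast
  have hnq : (n : ℝ) ^ 2 * (B / t ^ (m + 1)) ≤ 1 / 8 := by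
    rw [pow_succ t m, htm, show (n : ℝ) ^ 2 * (B / (b ^ m * n ^ 2 * t)) = B / b ^ m / t by
      field_simp, div_div, div_le_iff₀ (by positivity)]
    rw [div_le_iff₀ (by positivity)] at htB
    linarith
  rw [← hnp]
  exact three_quarters_le_measureReal_le_ripsDeath (fun i => hX i)
    (fun i j hij => hindep.indepFun (Fin.val_injective.ne hij)) (fun i => hlaw i)
    (measurableSet_lt measurable_const continuous_norm.measurable) (htail t (by linarith))
    (by positivity) (fun x hx => hball t ht (by linarith) x hx) (hnp ▸ hn32) hnq

end RipsDeath

/-- For i.i.d. samples from the heavy-tailed density `f_m` (`m ≥ 3`) and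
`ω_n = n − ⌈(1/4) n^{1−2/m}⌉`, eventually `P(d_{ω_n}(X_1, …, X_n) > 1) ≥ 1/4`; in
particular `d_{ω_n}` does not converge to `0` in probability, so it is not an admissible
bandwidth. -/
theorem ripsDeath_not_admissible {m : ℕ} (hm : 3 ≤ m) {c : ℝ} (hc : 0 < c)
    (hprob : IsProbabilityMeasure (heavyMeasure m c))
    {Ω : Type*} [MeasureSpace Ω] [IsProbabilityMeasure (ℙ : Measure Ω)]
    (X : ℕ → Ω → EuclideanSpace ℝ (Fin m)) (hmeas : ∀ i, Measurable (X i))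
    (hindep : iIndepFun X ℙ)
    (hlaw : ∀ i, Measure.map (X i) ℙ = heavyMeasure m c) :
    (∀ᶠ n : ℕ in atTop,
      (1 : ℝ) / 4 ≤ (ℙ {ω | 1 < ripsDeath (fun i : Fin n => X i ω)
        (n - ⌈(n : ℝ) ^ (1 - (2 : ℝ) / m) / 4⌉₊)}).toReal) ∧
    ¬ TendstoInMeasure ℙ (fun n ω => ripsDeath (fun i : Fin n => X i ω)
        (n - ⌈(n : ℝ) ^ (1 - (2 : ℝ) / m) / 4⌉₊)) atTop (fun _ => (0 : ℝ)) := by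
  have hmain : ∀ᶠ n : ℕ in atTop, (1 : ℝ) / 4 ≤ (ℙ {ω | 1 < ripsDeath
      (fun i : Fin n => X i ω) (n - ⌈(n : ℝ) ^ (1 - (2 : ℝ) / m) / 4⌉₊)}).toReal := by
    filter_upwards [eventually_three_quarters_le_measureReal_two_le_ripsDeath hm hc X hmeas
      hindep hlaw] with n hn
    refine le_trans (by norm_num) (hn.trans (measureReal_mono fun ω hω => ?_))
    exact one_lt_two.trans_le hω.out
  exact ⟨hmain, not_tendstoInMeasure_zero_of_le_measureReal one_pos (by norm_num) hmain⟩
end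

section
/- Let f : ℝ^m → [0, ∞) be a probability density function that is Lipschitz with Lipschitz constant M > 0, fix γ ∈ (0, 1), and let (ω_n) be a sequence of integers with 1 ≤ ω_n ≤ γ·n for all sufficiently large n. Let X_1, …, X_n be i.i.d. random vectors in ℝ^m with density f. Then there exists a constant C(f, γ) > 0, depending on f and γ but not on n, such that for all sufficiently large n, P( d_{ω_n}(X_1, …, X_n) ≤ C(f, γ) · n^{−1/m} ) ≥ 1 − 12/(n(1 − γ)); in particular this probability tends to 1 as n → ∞. -/
open MeasureTheory ProbabilityTheory Filter Metric

/-!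
Only tightness of the common law of the `X i` matters. With `ε = 1 - γ`, fix `R` such that
`P(X i ∈ closedBall 0 R) ≥ 1 - ε/4`, and cover the ball by the `(2K+1)^m` cells
`{v | ∀ j, ⌊v j / h⌋ = z j}`, `z ∈ [-K, K]^m`, of side `h = R/K`, where
`K ≈ (ε n / (4·3^m))^{1/m}`. Points in a common cell are within `√m h` of each other, so at
scale `√m h` the Rips graph has at most `#{points outside the ball} + (2K+1)^m` components,
which is at most `n - k` as soon as `k + (2K+1)^m` points fall into the ball. Chebyshev's
inequality for the binomial count of points in the ball shows that this happens with
probability at least `1 - 1/(nε)`.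
-/

open Finset

lemma indicator_comp_mem_Icc {Ω E : Type*} {S : Set E} {X : Ω → E} (ω : Ω) :
    (S.indicator (fun _ => (1 : ℝ)) ∘ X) ω ∈ Set.Icc 0 1 := by
  by_cases h : X ω ∈ S <;> simp [h]

section Chebyshev

variable {Ω E : Type*} [MeasurableSpace Ω] {μ : Measure Ω} [MeasurableSpace E]
  {S : Set E} {X : Ω → E}

lemma integral_indicator_comp (hX : Measurable X) (hS : MeasurableSet S) :
    μ[S.indicator (fun _ => (1 : ℝ)) ∘ X] = μ.real (X ⁻¹' S) := by
  have h : S.indicator (fun _ => (1 : ℝ)) ∘ X = (X ⁻¹' S).indicator 1 := by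
    ext ω; by_cases h : X ω ∈ S <;> simp [h]
  rw [h, integral_indicator_one (hX hS)]

lemma variance_indicator_comp_le [IsProbabilityMeasure μ] (hX : Measurable X)
    (hS : MeasurableSet S) :
    variance (S.indicator (fun _ => (1 : ℝ)) ∘ X) μ ≤ 1 - μ.real (X ⁻¹' S) := by
  have h := variance_le_sub_mul_sub (μ := μ) (Eventually.of_forall indicator_comp_mem_Icc)
    ((measurable_const.indicator hS).comp hX).aemeasurable
  rw [integral_indicator_comp hX hS, sub_zero] at h
  nlinarith [measureReal_nonneg (μ := μ) (s := X ⁻¹' S),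
    measureReal_le_one (μ := μ) (s := X ⁻¹' S)]

open scoped Classical in
lemma one_sub_div_sq_le_measureReal_card_filter_mem_gt [IsProbabilityMeasure μ] {ι : Type*}
    [Fintype ι] {X : ι → Ω → E} (hX : ∀ i, Measurable (X i))
    (hindep : Pairwise fun i j => IndepFun (X i) (X j) μ) (hS : MeasurableSet S) {η : ℝ}
    (hη : ∀ i, 1 - η ≤ μ.real (X i ⁻¹' S)) {t : ℝ} (ht : 0 < t) :
    1 - Fintype.card ι * η / t ^ 2 ≤
      μ.real {ω | Fintype.card ι * (1 - η) - t < #{i | X i ω ∈ S}} := by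
  set Y : ι → Ω → ℝ := fun i => S.indicator (fun _ => 1) ∘ X i
  have hYmeas : ∀ i, Measurable (Y i) := fun i => (measurable_const.indicator hS).comp (hX i)
  have hYmem : ∀ i, MemLp (Y i) 2 μ := fun i =>
    memLp_of_bounded (Eventually.of_forall indicator_comp_mem_Icc)
      (hYmeas i).aestronglyMeasurable 2
  have hcount : ∀ ω, (#{i | X i ω ∈ S} : ℝ) = ∑ i, Y i ω := fun ω => by
    simp [Y, Set.indicator_apply]
  have hmean : Fintype.card ι * (1 - η) ≤ μ[∑ i, Y i] := by
    simp only [Finset.sum_apply]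
    rw [integral_finsetSum _ fun i _ => (hYmem i).integrable one_le_two]
    calc Fintype.card ι * (1 - η) = ∑ _i : ι, (1 - η) := by
          rw [sum_const, card_univ, nsmul_eq_mul]
      _ ≤ _ := sum_le_sum fun i _ => (hη i).trans_eq (integral_indicator_comp (hX i) hS).symm
  have hvar : variance (∑ i, Y i) μ ≤ Fintype.card ι * η := by
    rw [IndepFun.variance_sum (fun i _ => hYmem i) fun i _ j _ hij =>
      (hindep hij).comp (measurable_const.indicator hS) (measurable_const.indicator hS)]
    calc ∑ i, variance (Y i) μ ≤ ∑ _i : ι, η :=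
          sum_le_sum fun i _ => (variance_indicator_comp_le (hX i) hS).trans (by linarith [hη i])
      _ = Fintype.card ι * η := by rw [sum_const, card_univ, nsmul_eq_mul]
  have hdev : {ω | Fintype.card ι * (1 - η) - t < #{i | X i ω ∈ S}}ᶜ ⊆
      {ω | t ≤ |(∑ i, Y i) ω - μ[∑ i, Y i]|} := by
    intro ω hω
    simp only [Set.mem_compl_iff, Set.mem_ofPred_eq, not_lt, hcount] at hω ⊢
    rw [Finset.sum_apply, abs_sub_comm]
    exact (by linarith : t ≤ _).trans (le_abs_self _)
  have hmeas : MeasurableSet {ω | Fintype.card ι * (1 - η) - t < #{i | X i ω ∈ S}} := by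
    simp_rw [hcount]
    exact measurableSet_lt measurable_const (Finset.measurable_sum _ fun i _ => hYmeas i)
  calc 1 - Fintype.card ι * η / t ^ 2
      ≤ 1 - variance (∑ i, Y i) μ / t ^ 2 := by gcongr
    _ ≤ 1 - μ.real {ω | t ≤ |(∑ i, Y i) ω - μ[∑ i, Y i]|} := by
        gcongr
        exact ENNReal.toReal_le_of_le_ofReal (div_nonneg (variance_nonneg _ _) (sq_nonneg t))
          (meas_ge_le_variance_div_sq (memLp_finsetSum' univ fun i _ => hYmem i) ht)
    _ ≤ 1 - μ.real {ω | Fintype.card ι * (1 - η) - t < #{i | X i ω ∈ S}}ᶜ := by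
        gcongr 1 - ?_
        exact measureReal_mono hdev
    _ = _ := by rw [probReal_compl_eq_one_sub hmeas, sub_sub_cancel]

end Chebyshev

lemma exists_pos_lt_measure_closedBall {E : Type*} [PseudoMetricSpace E] [MeasurableSpace E]
    (μ : Measure E) {a : ENNReal} (ha : a < μ Set.univ) (x : E) :
    ∃ R > (0 : ℝ), a < μ (closedBall x R) := by
  have hlim : Tendsto (fun N : ℕ => μ (closedBall x N)) atTop (nhds (μ Set.univ)) := by
    simpa [Function.comp_def, iUnion_closedBall_nat] using tendsto_measure_iUnion_atTop (μ := μ)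
      fun i j hij => closedBall_subset_closedBall (Nat.cast_le.2 hij)
  obtain ⟨N, hN, hpos⟩ :=
    ((hlim.eventually (lt_mem_nhds ha)).and (eventually_gt_atTop 0)).exists
  exact ⟨N, by exact_mod_cast hpos, hN⟩


lemma SimpleGraph.card_connectedComponent_le_card_image {V β : Type*} [Fintype V] [DecidableEq β]
    (G : SimpleGraph V) (g : V → β) (hg : ∀ i j, g i = g j → G.Reachable i j) :
    Nat.card G.ConnectedComponent ≤ #(univ.image g) :=
  calc Nat.card G.ConnectedComponent ≤ Nat.card (univ.image g) :=
        Nat.card_le_card_of_injective (fun c => ⟨g c.out, mem_image_of_mem g (mem_univ _)⟩)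
          fun c₁ c₂ h => by
            rw [← c₁.out_eq, ← c₂.out_eq]
            exact SimpleGraph.ConnectedComponent.sound (hg _ _ (congrArg Subtype.val h))
    _ = #(univ.image g) := Nat.card_eq_finsetCard _

lemma EuclideanSpace.dist_le_sqrt_card_mul {ι : Type*} [Fintype ι] {u v : EuclideanSpace ℝ ι}
    {h : ℝ} (hh : 0 ≤ h) (huv : ∀ i, dist (u i) (v i) ≤ h) :
    dist u v ≤ √(Fintype.card ι) * h := by
  calc dist u v = √(∑ i, dist (u i) (v i) ^ 2) := by rw [EuclideanSpace.dist_eq]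
    _ ≤ √(∑ _i : ι, h ^ 2) := by gcongr with i; exact huv i
    _ = √(Fintype.card ι) * h := by
        rw [Finset.sum_const, Finset.card_univ, nsmul_eq_mul, Real.sqrt_mul (by positivity),
          Real.sqrt_sq hh]

lemma EuclideanSpace.dist_le_of_floor_div_eq {ι : Type*} [Fintype ι] {u v : EuclideanSpace ℝ ι}
    {h : ℝ} (hh : 0 < h) (huv : ∀ i, ⌊u i / h⌋ = ⌊v i / h⌋) :
    dist u v ≤ √(Fintype.card ι) * h := by
  refine EuclideanSpace.dist_le_sqrt_card_mul hh.le fun i => ?_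
  have h1 := (Int.abs_sub_lt_one_of_floor_eq_floor (huv i)).le
  rwa [← sub_div, abs_div, abs_of_pos hh, div_le_one hh, ← Real.dist_eq] at h1

lemma EuclideanSpace.floor_div_mem_Icc {ι : Type*} [Fintype ι] {v : EuclideanSpace ℝ ι}
    {h : ℝ} (hh : 0 < h) {K : ℕ} (hv : v ∈ closedBall 0 (K * h)) (i : ι) :
    ⌊v i / h⌋ ∈ Icc (-K : ℤ) K := by
  have hvi : |v i / h| ≤ K := by
    rw [abs_div, abs_of_pos hh, div_le_iff₀ hh]
    exact (PiLp.norm_apply_le v i).trans (mem_closedBall_zero_iff.mp hv)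
  rw [abs_le] at hvi
  rw [Finset.mem_Icc, Int.le_floor, Int.floor_le_iff]
  push_cast
  constructor <;> linarith [hvi.1, hvi.2]

section Rips

open scoped Classical

variable {n m : ℕ}

lemma ripsDeath_le_of_card_le (x : Fin n → EuclideanSpace ℝ (Fin m)) (k : ℕ) {r : ℝ}
    (hr : 0 ≤ r) (h : Nat.card (ripsGraph x r).ConnectedComponent ≤ n - k) :
    ripsDeath x k ≤ r :=
  csInf_le ⟨0, fun _ hs => hs.1⟩ ⟨hr, h⟩

lemma card_connectedComponent_ripsGraph_le (x : Fin n → EuclideanSpace ℝ (Fin m)) {r : ℝ}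
    {S : Set (EuclideanSpace ℝ (Fin m))} {κ : Type*} (cell : EuclideanSpace ℝ (Fin m) → κ)
    (T : Finset κ) (hT : ∀ v ∈ S, cell v ∈ T)
    (hcell : ∀ u v, cell u = cell v → dist u v ≤ r) :
    Nat.card (ripsGraph x r).ConnectedComponent ≤ #{i | x i ∉ S} + #T := by
  set g : Fin n → Fin n ⊕ κ := fun i => if x i ∈ S then .inr (cell (x i)) else .inl i
  have hg : ∀ i j, g i = g j → (ripsGraph x r).Reachable i j := by
    intro i j hij
    obtain rfl | hne := eq_or_ne i j
    · rfl
    · by_cases hi : x i ∈ S <;> by_cases hj : x j ∈ S <;> simp [g, hi, hj] at hij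
      · exact SimpleGraph.Adj.reachable ⟨hne, hcell _ _ hij⟩
      · exact absurd hij hne
  have himage : univ.image g ⊆ ({i | x i ∉ S} : Finset (Fin n)).disjSum T := by
    intro y hy
    obtain ⟨i, -, rfl⟩ := mem_image.mp hy
    by_cases hi : x i ∈ S <;> simp [g, hi, hT]
  calc _ ≤ #(univ.image g) := (ripsGraph x r).card_connectedComponent_le_card_image g hg
    _ ≤ #(({i | x i ∉ S} : Finset (Fin n)).disjSum T) := card_le_card himage
    _ = _ := card_disjSum _ _

lemma ripsDeath_le_of_card_mem_closedBall (x : Fin n → EuclideanSpace ℝ (Fin m)) (k : ℕ)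
    {h : ℝ} (hh : 0 < h) (K : ℕ)
    (hcard : k + (2 * K + 1) ^ m ≤ #{i | x i ∈ closedBall 0 (K * h)}) :
    ripsDeath x k ≤ √m * h := by
  refine ripsDeath_le_of_card_le x k (by positivity) ?_
  have hcomp := card_connectedComponent_ripsGraph_le x (r := √m * h)
    (S := closedBall 0 (K * h)) (fun v i => ⌊v i / h⌋)
    (Fintype.piFinset fun _ => Icc (-K : ℤ) K)
    (fun v hv => Fintype.mem_piFinset.2 (EuclideanSpace.floor_div_mem_Icc hh hv))
    (fun u v huv => by simpa using EuclideanSpace.dist_le_of_floor_div_eq hh (congrFun huv))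
  have hsplit := card_filter_add_card_filter_not (s := univ)
    (fun i => x i ∈ closedBall 0 (K * h))
  have hside : ((K : ℤ) + 1 - -K).toNat = 2 * K + 1 := by omega
  rw [Fintype.card_piFinset, prod_const, Int.card_Icc, hside] at hcomp
  simp only [card_univ, Fintype.card_fin] at hsplit hcomp
  omega

end Rips

lemma exists_nat_pos_pow_le_and_inv_le_rpow (m : ℕ) {a : ℝ} (ha : 1 ≤ a) :
    ∃ K : ℕ, 0 < K ∧ (2 * K + 1 : ℝ) ^ m ≤ 3 ^ m * a ∧
      (K : ℝ)⁻¹ ≤ 2 * a ^ (-(1 : ℝ) / m) := by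
  set b := a ^ ((m : ℝ)⁻¹)
  have hb : 1 ≤ b := Real.one_le_rpow ha (by positivity)
  have hK : 1 ≤ ⌊b⌋₊ := Nat.le_floor (by simpa using hb)
  have hK' : (1 : ℝ) ≤ ⌊b⌋₊ := by exact_mod_cast hK
  have hKb : (⌊b⌋₊ : ℝ) ^ m ≤ a := by
    rcases Nat.eq_zero_or_pos m with rfl | hm
    · simpa using ha
    · calc (⌊b⌋₊ : ℝ) ^ m ≤ b ^ m := by gcongr; exact Nat.floor_le (by positivity)
        _ = a := Real.rpow_inv_natCast_pow (by positivity) hm.ne'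
  refine ⟨⌊b⌋₊, hK, ?_, ?_⟩
  · calc (2 * ⌊b⌋₊ + 1 : ℝ) ^ m ≤ (3 * ⌊b⌋₊) ^ m := by gcongr; linarith
      _ ≤ 3 ^ m * a := by rw [mul_pow]; gcongr
  · rw [neg_div, one_div, Real.rpow_neg (by positivity), ← div_eq_mul_inv,
      inv_le_comm₀ (by positivity) (by positivity), inv_div]
    have := Nat.lt_floor_add_one b
    rw [div_le_iff₀ two_pos]
    linarith

/-- With `δ = ε / (4·3^m)` and `K ≈ (δ n)^{1/m}` cells per axis, the cells have diameter
`√m R / K ≤ 2 R √m (δ n)^{-1/m}`; the `+ 1` keeps the constant positive when `m = 0`. -/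
noncomputable def ripsDeathConst (m : ℕ) (R ε : ℝ) : ℝ :=
  2 * R * (√m + 1) * (ε / (4 * 3 ^ m)) ^ (-(1 : ℝ) / m)

lemma ripsDeathConst_pos {m : ℕ} {R ε : ℝ} (hR : 0 < R) (hε : 0 < ε) :
    0 < ripsDeathConst m R ε := by
  unfold ripsDeathConst; positivity

section Quantile

open scoped Classical

variable {Ω : Type*} [MeasurableSpace Ω] {μ : Measure Ω} [IsProbabilityMeasure μ]

lemma one_sub_div_le_measureReal_ripsDeath_le {m n k : ℕ}
    {X : ℕ → Ω → EuclideanSpace ℝ (Fin m)} (hX : ∀ i, Measurable (X i))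
    (hindep : Pairwise fun i j => IndepFun (X i) (X j) μ) {R ε : ℝ} (hR : 0 < R) (hε : 0 < ε)
    (hball : ∀ i, 1 - ε / 4 ≤ μ.real (X i ⁻¹' closedBall 0 R))
    (hk : (k : ℝ) ≤ (1 - ε) * n) (hn : 4 * 3 ^ m ≤ ε * n) :
    1 - 1 / (n * ε) ≤ μ.real {ω | ripsDeath (fun i : Fin n => X i ω) k
      ≤ ripsDeathConst m R ε * (n : ℝ) ^ (-(1 : ℝ) / m)} := by
  set δ := ε / (4 * 3 ^ m)
  have hn0 : (0 : ℝ) < n :=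
    pos_of_mul_pos_right ((by positivity : (0 : ℝ) < 4 * 3 ^ m).trans_le hn) hε.le
  have hδn : 1 ≤ δ * n := by
    rw [div_mul_eq_mul_div, le_div_iff₀ (by positivity)]; linarith
  obtain ⟨K, hK, hgrid, hinv⟩ := exists_nat_pos_pow_le_and_inv_le_rpow m hδn
  have hgrid' : (2 * K + 1 : ℝ) ^ m ≤ ε * n / 4 :=
    hgrid.trans_eq (by simp only [δ]; field_simp)
  have hradius : √m * (R / K) ≤ ripsDeathConst m R ε * (n : ℝ) ^ (-(1 : ℝ) / m) :=
    calc √m * (R / K) = √m * R * (K : ℝ)⁻¹ := by ring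
      _ ≤ √m * R * (2 * (δ * n) ^ (-(1 : ℝ) / m)) := by gcongr
      _ = 2 * R * √m * δ ^ (-(1 : ℝ) / m) * (n : ℝ) ^ (-(1 : ℝ) / m) := by
          rw [Real.mul_rpow (by positivity) hn0.le]; ring
      _ ≤ ripsDeathConst m R ε * (n : ℝ) ^ (-(1 : ℝ) / m) := by
          unfold ripsDeathConst; gcongr; linarith
  have hcount := one_sub_div_sq_le_measureReal_card_filter_mem_gt (X := fun i : Fin n => X i)
    (fun i => hX i) (fun i j hij => hindep (Fin.val_injective.ne hij)) measurableSet_closedBall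
    (fun i => hball i) (t := ε * n / 2) (by positivity)
  rw [Fintype.card_fin] at hcount
  calc 1 - 1 / (n * ε) = 1 - n * (ε / 4) / (ε * n / 2) ^ 2 := by field_simp; ring
    _ ≤ _ := hcount
    _ ≤ _ := measureReal_mono fun ω hω => by
        have hmany :
            k + (2 * K + 1) ^ m ≤ #{i : Fin n | X i ω ∈ closedBall 0 (K * (R / K))} := by
          rw [mul_div_cancel₀ _ (by positivity)]
          have : (k + (2 * K + 1) ^ m : ℝ) < #{i : Fin n | X i ω ∈ closedBall 0 R} := by
            simp only [Set.mem_ofPred_eq] at hω; linarith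
          exact_mod_cast this.le
        exact (ripsDeath_le_of_card_mem_closedBall _ k (by positivity) K hmany).trans hradius

end Quantile

theorem ripsDeath_upper_quantile_bound_general {m : ℕ}
    (f : EuclideanSpace ℝ (Fin m) → ℝ)
    {γ : ℝ} (hγ1 : γ < 1)
    (w : ℕ → ℕ) (hw : ∀ᶠ n : ℕ in atTop, 1 ≤ w n ∧ (w n : ℝ) ≤ γ * n)
    {Ω : Type*} [MeasureSpace Ω] [IsProbabilityMeasure (ℙ : Measure Ω)]
    (X : ℕ → Ω → EuclideanSpace ℝ (Fin m)) (hmeas : ∀ i, Measurable (X i))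
    (hindep : iIndepFun X ℙ)
    (hlaw : ∀ i, Measure.map (X i) ℙ = volume.withDensity fun x => ENNReal.ofReal (f x)) :
    ∃ C > (0 : ℝ),
      (∀ᶠ n : ℕ in atTop,
        1 - 12 / (n * (1 - γ)) ≤
          (ℙ {ω | ripsDeath (fun i : Fin n => X i ω) (w n)
            ≤ C * (n : ℝ) ^ (-(1 : ℝ) / m)}).toReal) ∧
      Tendsto (fun n : ℕ =>
          (ℙ {ω | ripsDeath (fun i : Fin n => X i ω) (w n)
            ≤ C * (n : ℝ) ^ (-(1 : ℝ) / m)}).toReal) atTop (nhds 1) := by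
  set ε := 1 - γ
  have hε : 0 < ε := sub_pos.2 hγ1
  have := Measure.isProbabilityMeasure_map (μ := ℙ) (hmeas 0).aemeasurable
  obtain ⟨R, hR, hR_mass⟩ := exists_pos_lt_measure_closedBall (Measure.map (X 0) ℙ)
    (a := ENNReal.ofReal (1 - ε / 4))
    (by rw [measure_univ, ENNReal.ofReal_lt_one]; linarith) 0
  have hball : ∀ i, 1 - ε / 4 ≤ (ℙ : Measure Ω).real (X i ⁻¹' closedBall 0 R) := by
    intro i
    rw [measureReal_def, ← Measure.map_apply (hmeas i) measurableSet_closedBall, hlaw i,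
      ← hlaw 0]
    exact (ENNReal.ofReal_le_iff_le_toReal (measure_ne_top _ _)).1 hR_mass.le
  have hbound : ∀ᶠ n : ℕ in atTop, 1 - 12 / (n * ε) ≤
      (ℙ {ω | ripsDeath (fun i : Fin n => X i ω) (w n)
        ≤ ripsDeathConst m R ε * (n : ℝ) ^ (-(1 : ℝ) / m)}).toReal := by
    filter_upwards [hw, tendsto_natCast_atTop_atTop.eventually_ge_atTop (4 * 3 ^ m / ε)]
      with n hwn hn
    refine le_trans ?_ (one_sub_div_le_measureReal_ripsDeath_le hmeas
      (fun i j hij => hindep.indepFun hij) hR hε hball (by rw [sub_sub_cancel]; exact hwn.2)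
      (by rwa [div_le_iff₀' hε] at hn))
    gcongr 1 - ?_ / _
    norm_num
  have hlower : Tendsto (fun n : ℕ => 1 - 12 / (n * ε)) atTop (nhds 1) := by
    simpa using tendsto_const_nhds.sub
      ((tendsto_natCast_atTop_atTop.atTop_mul_const hε).const_div_atTop (12 : ℝ))
  exact ⟨_, ripsDeathConst_pos hR hε, hbound, tendsto_of_tendsto_of_tendsto_of_le_of_le' hlower
    tendsto_const_nhds hbound (Eventually.of_forall fun _ => measureReal_le_one)⟩

/-- Let `f` be a Lipschitz probability density on `ℝ^m` (Lipschitz constant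
`M > 0`), `γ ∈ (0,1)`, and `(ω_n)` integers with `1 ≤ ω_n ≤ γ n` for large `n`.  For i.i.d.
samples with density `f`, there is a constant `C = C(f, γ) > 0` such that for all sufficiently
large `n`, `P(d_{ω_n}(X_1, …, X_n) ≤ C n^{−1/m}) ≥ 1 − 12/(n(1 − γ))`; in particular this
probability tends to `1` as `n → ∞`. -/
theorem ripsDeath_upper_quantile_bound {m : ℕ}
    (f : EuclideanSpace ℝ (Fin m) → ℝ) (hf0 : ∀ x, 0 ≤ f x) (hfint : ∫ x, f x = 1)
    {M : ℝ} (hM : 0 < M) (hLip : LipschitzWith M.toNNReal f)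
    {γ : ℝ} (hγ0 : 0 < γ) (hγ1 : γ < 1)
    (w : ℕ → ℕ) (hw : ∀ᶠ n : ℕ in atTop, 1 ≤ w n ∧ (w n : ℝ) ≤ γ * n)
    {Ω : Type*} [MeasureSpace Ω] [IsProbabilityMeasure (ℙ : Measure Ω)]
    (X : ℕ → Ω → EuclideanSpace ℝ (Fin m)) (hmeas : ∀ i, Measurable (X i))
    (hindep : iIndepFun X ℙ)
    (hlaw : ∀ i, Measure.map (X i) ℙ = volume.withDensity fun x => ENNReal.ofReal (f x)) :
    ∃ C > (0 : ℝ),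
      (∀ᶠ n : ℕ in atTop,
        1 - 12 / (n * (1 - γ)) ≤
          (ℙ {ω | ripsDeath (fun i : Fin n => X i ω) (w n)
            ≤ C * (n : ℝ) ^ (-(1 : ℝ) / m)}).toReal) ∧
      Tendsto (fun n : ℕ =>
          (ℙ {ω | ripsDeath (fun i : Fin n => X i ω) (w n)
            ≤ C * (n : ℝ) ^ (-(1 : ℝ) / m)}).toReal) atTop (nhds 1) :=
  ripsDeath_upper_quantile_bound_general f hγ1 w hw X hmeas hindep hlaw
end

section
/- Let f : ℝ^m → [0, ∞) be a probability density function that is Lipschitz and bounded above, let 0 < γ₁ < γ₂ < 1, and let (ω_n) be a sequence of integers with γ₁·n < ω_n < γ₂·n for all sufficiently large n. Let X_1, X_2, … be i.i.d. random vectors in ℝ^m with density f. Then d_{ω_n}(X_1, …, X_n) → 0 in probability, and n · d_{ω_n}(X_1, …, X_n)^{m/2} → ∞ in probability (i.e., for every K > 0, P( n · d_{ω_n}^{m/2} ≥ K ) → 1 as n → ∞); that is, d_{ω_n} satisfies the defining limits of an admissible bandwidth in probability. -/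
open MeasureTheory ProbabilityTheory Filter Metric

open scoped Topology ENNReal Finset Function

/-! The upper bound: all but a small fraction of the sample lies, with high probability (strong
law of large numbers), in a compact set covered by finitely many `ε / 4`-balls, so the Rips graph
at scale `ε / 2` has at most `(1 - γ₂) n ≤ n - ω_n` components once `n` is large.

The lower bound: a graph on `n` vertices with at most `n - ω_n` components has at least `ω_n`
adjacent ordered pairs, whereas at scale `r_n = (K / n) ^ (2 / m)` a bounded density makes the
expected number of `r_n`-close ordered pairs `O(n² r_n ^ m) = O(1)`; since `ω_n ≥ γ₁ n → ∞`,
Markov's inequality gives `P(d_{ω_n} < r_n) → 0`. -/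

namespace SimpleGraph

variable {V : Type*} (G : SimpleGraph V)

lemma eq_of_reachable_of_forall_not_adj {u v : V} (hu : ∀ w, ¬G.Adj u w)
    (huv : G.Reachable u v) : u = v := by
  obtain ⟨p⟩ := huv
  cases p with
  | nil => rfl
  | cons h _ => exact absurd h (hu _)

/-- Isolated vertices lie in distinct components, and every other vertex starts an
adjacent ordered pair. -/
lemma card_le_card_connectedComponent_add_card_adj [Fintype V] [DecidableRel G.Adj] :
    Fintype.card V ≤ Nat.card G.ConnectedComponent + #{p : V × V | G.Adj p.1 p.2} := by
  classical
  let g : V → G.ConnectedComponent ⊕ {p : V × V // G.Adj p.1 p.2} := fun v =>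
    if h : ∃ w, G.Adj v w then .inr ⟨(v, h.choose), h.choose_spec⟩
    else .inl (G.connectedComponentMk v)
  have hg : g.Injective := by
    intro u v huv
    by_cases hu : ∃ w, G.Adj u w <;> by_cases hv : ∃ w, G.Adj v w <;>
      simp only [g, hu, hv, dite_true, dite_false, reduceCtorEq, Sum.inl.injEq, Sum.inr.injEq,
        Subtype.mk.injEq, Prod.mk.injEq] at huv
    · exact huv.1
    · simp only [not_exists] at hu
      exact G.eq_of_reachable_of_forall_not_adj hu (ConnectedComponent.exact huv)
  rw [← Nat.card_eq_fintype_card, ← Fintype.card_subtype, ← Nat.card_eq_fintype_card,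
    ← Nat.card_sum]
  exact Nat.card_le_card_of_injective g hg

lemma card_connectedComponent_le_card_range [Finite V] {α : Type*} (key : V → α)
    (hkey : ∀ u v, key u = key v → G.Reachable u v) :
    Nat.card G.ConnectedComponent ≤ Nat.card (Set.range key) := by
  refine Nat.card_le_card_of_surjective (fun a => G.connectedComponentMk a.2.choose) ?_
  refine ConnectedComponent.ind fun v => ⟨⟨key v, v, rfl⟩, ?_⟩
  exact ConnectedComponent.sound (hkey _ _ (Exists.choose_spec (⟨v, rfl⟩ : ∃ u, key u = key v)))

end SimpleGraph

section Rips

variable {n m : ℕ} (x : Fin n → EuclideanSpace ℝ (Fin m))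

lemma ripsGraph_mono : Monotone (ripsGraph x) :=
  fun _ _ hr _ _ h => ⟨h.1, h.2.trans hr⟩

lemma ripsDeath_nonneg (k : ℕ) : 0 ≤ ripsDeath x k :=
  Real.sInf_nonneg fun _ h => h.1

variable {x}

lemma ripsDeath_le {k : ℕ} {r : ℝ} (hr : 0 ≤ r)
    (h : Nat.card (ripsGraph x r).ConnectedComponent ≤ n - k) : ripsDeath x k ≤ r :=
  csInf_le ⟨0, fun _ h => h.1⟩ ⟨hr, h⟩

lemma card_connectedComponent_ripsGraph_diam_le_one :
    Nat.card (ripsGraph x (diam (Set.range x))).ConnectedComponent ≤ 1 := by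
  have hpre : (ripsGraph x (diam (Set.range x))).Preconnected := fun i j => by
    rcases eq_or_ne i j with rfl | hij
    · rfl
    · exact SimpleGraph.Adj.reachable
        ⟨hij, dist_le_diam_of_mem (Set.finite_range x).isBounded ⟨i, rfl⟩ ⟨j, rfl⟩⟩
  have := hpre.subsingleton_connectedComponent
  exact Finite.card_le_one_iff_subsingleton.mpr this

lemma card_connectedComponent_ripsGraph_le_of_ripsDeath_lt {k : ℕ} (hk : k < n) {r : ℝ}
    (h : ripsDeath x k < r) : Nat.card (ripsGraph x r).ConnectedComponent ≤ n - k := by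
  have hne : {r : ℝ | 0 ≤ r ∧ Nat.card (ripsGraph x r).ConnectedComponent ≤ n - k}.Nonempty :=
    ⟨_, diam_nonneg, card_connectedComponent_ripsGraph_diam_le_one.trans (by omega)⟩
  obtain ⟨r', ⟨-, hr'⟩, hr'r⟩ := (csInf_lt_iff ⟨0, fun _ h => h.1⟩ hne).mp h
  exact (SimpleGraph.ConnectedComponent.card_le_card_of_le (ripsGraph_mono x hr'r.le)).trans hr'

lemma le_card_adj_ripsGraph_of_ripsDeath_lt {k : ℕ} (hk : k < n) {r : ℝ}
    (h : ripsDeath x k < r) [DecidableRel (ripsGraph x r).Adj] :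
    k ≤ #{p : Fin n × Fin n | (ripsGraph x r).Adj p.1 p.2} := by
  have hcomp := card_connectedComponent_ripsGraph_le_of_ripsDeath_lt hk h
  have hcard := (ripsGraph x r).card_le_card_connectedComponent_add_card_adj
  rw [Fintype.card_fin] at hcard
  omega

/-- Two points of `s` assigned the same centre of `t` are within `r` of each other. -/
lemma card_connectedComponent_ripsGraph_le_s12 {r : ℝ} {s : Set (EuclideanSpace ℝ (Fin m))}
    [DecidablePred (· ∈ s)] {t : Finset (EuclideanSpace ℝ (Fin m))}
    (hs : ∀ y ∈ s, ∃ c ∈ t, dist y c < r / 2) :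
    Nat.card (ripsGraph x r).ConnectedComponent ≤ #t + #{i | x i ∉ s} := by
  choose! c hct hc using hs
  let key : Fin n → EuclideanSpace ℝ (Fin m) ⊕ Fin n := fun i =>
    if x i ∈ s then .inl (c (x i)) else .inr i
  have hkey : ∀ i j, key i = key j → (ripsGraph x r).Reachable i j := by
    intro i j hij
    rcases eq_or_ne i j with rfl | hne
    · rfl
    refine SimpleGraph.Adj.reachable ⟨hne, ?_⟩
    by_cases hi : x i ∈ s <;> by_cases hj : x j ∈ s <;>
      simp only [key, hi, hj, if_true, if_false, reduceCtorEq, Sum.inl.injEq,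
        Sum.inr.injEq] at hij
    · have hi' := hc _ hi
      rw [hij] at hi'
      linarith [hc _ hj, dist_triangle_right (x i) (x j) (c (x j))]
    · exact absurd hij hne
  have hrange : Set.range key ⊆ ↑(t.disjSum {i | x i ∉ s}) := by
    rintro _ ⟨i, rfl⟩
    by_cases hi : x i ∈ s <;> simp [key, hi, hct]
  calc Nat.card (ripsGraph x r).ConnectedComponent ≤ Nat.card (Set.range key) :=
        (ripsGraph x r).card_connectedComponent_le_card_range key hkey
    _ ≤ Nat.card ↑(t.disjSum {i | x i ∉ s} : Set _) :=
        Nat.card_mono (Finset.finite_toSet _) hrange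
    _ = #t + #{i | x i ∉ s} := by
        rw [Nat.card_coe_set_eq, Set.ncard_coe_finset, Finset.card_disjSum]

lemma ripsDeath_le_of_forall_exists_dist_lt {k : ℕ} {r : ℝ} (hr : 0 ≤ r)
    {s : Set (EuclideanSpace ℝ (Fin m))} [DecidablePred (· ∈ s)]
    {t : Finset (EuclideanSpace ℝ (Fin m))} (hs : ∀ y ∈ s, ∃ c ∈ t, dist y c < r / 2)
    (hk : #t + #{i | x i ∉ s} ≤ n - k) : ripsDeath x k ≤ r :=
  ripsDeath_le hr ((card_connectedComponent_ripsGraph_le_s12 hs).trans hk)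

end Rips

section Probability

variable {Ω E : Type*} {mΩ : MeasurableSpace Ω} {μ : Measure Ω}

lemma measure_dist_le_le_of_indepFun [PseudoMetricSpace E] [MeasurableSpace E] [BorelSpace E]
    [SecondCountableTopology E] [IsProbabilityMeasure μ] {X Y : Ω → E} (hX : Measurable X)
    (hY : Measurable Y) (hXY : IndepFun X Y μ) {r : ℝ} {c : ℝ≥0∞}
    (hc : ∀ x, μ.map Y (closedBall x r) ≤ c) :
    μ {ω | dist (X ω) (Y ω) ≤ r} ≤ c := by
  have hA : MeasurableSet {p : E × E | dist p.1 p.2 ≤ r} :=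
    measurableSet_le measurable_dist measurable_const
  have hsec : ∀ x, Prod.mk x ⁻¹' {p : E × E | dist p.1 p.2 ≤ r} = closedBall x r := fun x => by
    ext y
    simp [dist_comm]
  calc μ {ω | dist (X ω) (Y ω) ≤ r}
      = (μ.map X).prod (μ.map Y) {p | dist p.1 p.2 ≤ r} := by
        rw [← (indepFun_iff_map_prod_eq_prod_map_map hX.aemeasurable hY.aemeasurable).mp hXY,
          Measure.map_apply (hX.prodMk hY) hA]
        rfl
    _ ≤ ∫⁻ _, c ∂μ.map X := by
        rw [Measure.prod_apply hA]
        exact lintegral_mono fun x => (hsec x).symm ▸ hc x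
    _ = c := by simp [Measure.map_apply hX MeasurableSet.univ]

lemma measure_le_card_adj_le {V : Type*} [Fintype V] (G : Ω → SimpleGraph V)
    [∀ ω, DecidableRel (G ω).Adj] (hG : ∀ u v, MeasurableSet {ω | (G ω).Adj u v}) {c : ℝ≥0∞}
    (hc : ∀ u v, u ≠ v → μ {ω | (G ω).Adj u v} ≤ c) {a : ℝ≥0∞} (ha : a ≠ 0) (ha' : a ≠ ∞) :
    μ {ω | a ≤ #{p : V × V | (G ω).Adj p.1 p.2}} ≤ Fintype.card V ^ 2 * c / a := by
  have hsum : ∀ ω, (#{p : V × V | (G ω).Adj p.1 p.2} : ℝ≥0∞) =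
      ∑ p : V × V, {ω | (G ω).Adj p.1 p.2}.indicator 1 ω := fun ω => by
    simp [Set.indicator_apply]
  have hmeas : ∀ p : V × V, Measurable ({ω | (G ω).Adj p.1 p.2}.indicator (1 : Ω → ℝ≥0∞)) :=
    fun p => measurable_one.indicator (hG p.1 p.2)
  have hp : ∀ p : V × V, μ {ω | (G ω).Adj p.1 p.2} ≤ c := fun p => by
    rcases eq_or_ne p.1 p.2 with h | h
    · simp [h]
    · exact hc _ _ h
  simp_rw [hsum]
  calc μ {ω | a ≤ ∑ p : V × V, {ω | (G ω).Adj p.1 p.2}.indicator 1 ω}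
      ≤ (∫⁻ ω, ∑ p : V × V, {ω | (G ω).Adj p.1 p.2}.indicator 1 ω ∂μ) / a :=
        meas_ge_le_lintegral_div (Finset.measurable_sum _ fun p _ => hmeas p).aemeasurable
          ha ha'
    _ = (∑ p : V × V, μ {ω | (G ω).Adj p.1 p.2}) / a := by
        rw [lintegral_finsetSum _ fun p _ => hmeas p]
        simp_rw [lintegral_indicator_one (hG _ _)]
    _ ≤ Fintype.card V ^ 2 * c / a := by
        gcongr
        calc ∑ p : V × V, μ {ω | (G ω).Adj p.1 p.2} ≤ ∑ _p : V × V, c :=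
              Finset.sum_le_sum fun p _ => hp p
          _ = Fintype.card V ^ 2 * c := by simp [sq]

lemma tendsto_measure_toReal_one_of_tendsto_measure_compl [IsProbabilityMeasure μ] {ι : Type*}
    {l : Filter ι} {s : ι → Set Ω} (h : Tendsto (fun i => μ (s i)ᶜ) l (𝓝 0)) :
    Tendsto (fun i => (μ (s i)).toReal) l (𝓝 1) := by
  have hlower : Tendsto (fun i => 1 - μ (s i)ᶜ) l (𝓝 1) := by
    simpa using ENNReal.Tendsto.sub tendsto_const_nhds h (Or.inl ENNReal.one_ne_top)
  have hs : Tendsto (fun i => μ (s i)) l (𝓝 1) :=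
    tendsto_of_tendsto_of_tendsto_of_le_of_le hlower tendsto_const_nhds
      (fun i => tsub_le_iff_right.mpr (measure_univ (μ := μ) ▸ measure_univ_le_add_compl (s i)))
      (fun i => prob_le_one)
  have := (ENNReal.tendsto_toReal ENNReal.one_ne_top).comp hs
  rwa [ENNReal.toReal_one] at this

lemma exists_isCompact_measureReal_preimage_compl_lt [IsProbabilityMeasure μ] [MetricSpace E]
    [CompleteSpace E] [SecondCountableTopology E] [MeasurableSpace E] [BorelSpace E]
    {X : Ω → E} (hX : Measurable X) {β : ℝ} (hβ : 0 < β) :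
    ∃ K, IsCompact K ∧ μ.real (X ⁻¹' Kᶜ) < β := by
  obtain ⟨K, hK, hKμ⟩ := isTightMeasureSet_iff_exists_isCompact_measure_compl_le.mp
    (isTightMeasureSet_singleton (μ := μ.map X)) (ENNReal.ofReal (β / 2)) (by positivity)
  refine ⟨K, hK, ?_⟩
  have h := hKμ _ rfl
  rw [Measure.map_apply hX hK.isClosed.measurableSet.compl] at h
  have := ENNReal.toReal_le_of_le_ofReal (by positivity) h
  rw [measureReal_def]
  linarith

/-- The strong law of large numbers for the indicator of `X i ∈ s`. -/
lemma tendsto_measure_lt_card_mem [IsFiniteMeasure μ] [MeasurableSpace E] {X : ℕ → Ω → E}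
    (hX : ∀ i, Measurable (X i)) (hindep : Pairwise ((· ⟂ᵢ[μ] ·) on X))
    (hident : ∀ i, IdentDistrib (X i) (X 0) μ μ) {s : Set E} (hs : MeasurableSet s)
    [DecidablePred (· ∈ s)] {β : ℝ} (hβ : μ.real (X 0 ⁻¹' s) < β) :
    Tendsto (fun n : ℕ => μ {ω | β * n < #{i : Fin n | X i ω ∈ s}}) atTop (𝓝 0) := by
  set Y : ℕ → Ω → ℝ := fun i => s.indicator 1 ∘ X i
  have hg : Measurable (s.indicator (1 : E → ℝ)) := measurable_one.indicator hs
  have hYX : ∀ i, Y i = (X i ⁻¹' s).indicator 1 := fun i => by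
    ext ω
    exact (Set.indicator_comp_right (X i)).symm
  have hcount : ∀ n ω, (#{i : Fin n | X i ω ∈ s} : ℝ) = ∑ i ∈ Finset.range n, Y i ω :=
    fun n ω => by
      rw [← Fin.sum_univ_eq_sum_range (fun i => Y i ω)]
      simp [Y, Set.indicator_apply]
  have hmean : μ[Y 0] = μ.real (X 0 ⁻¹' s) := by
    rw [hYX, integral_indicator_one (hX 0 hs)]
  have hae := strong_law_ae_real Y
    ((integrable_const (1 : ℝ)).indicator (hX 0 hs) |>.congr (by rw [hYX]; rfl))
    (fun i j hij => (hindep hij).comp hg hg) (fun i => (hident i).comp hg)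
  rw [hmean] at hae
  have hmeas := tendstoInMeasure_iff_dist.mp (tendstoInMeasure_of_tendsto_ae (fun n =>
    ((Finset.measurable_sum _ fun i _ => hg.comp (hX i)).div_const _).aestronglyMeasurable) hae)
    _ (sub_pos.mpr hβ)
  refine tendsto_of_tendsto_of_tendsto_of_le_of_le' tendsto_const_nhds hmeas
    (Eventually.of_forall fun n => zero_le) ?_
  filter_upwards [eventually_gt_atTop 0] with n hn
  refine measure_mono fun ω hω => ?_
  have hn' : (0 : ℝ) < n := by exact_mod_cast hn
  have hlt : β < (∑ i ∈ Finset.range n, Y i ω) / n := by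
    rw [lt_div_iff₀ hn', ← hcount]
    exact hω
  simp only [Set.mem_ofPred_eq, Real.dist_eq]
  rw [abs_of_pos (by linarith)]
  linarith

end Probability

lemma withDensity_closedBall_le {E : Type*} [NormedAddCommGroup E] [NormedSpace ℝ E]
    [FiniteDimensional ℝ E] [MeasurableSpace E] [BorelSpace E] (μ : Measure E)
    [μ.IsAddHaarMeasure]
    {f : E → ℝ} {M : ℝ} (hf : ∀ x, f x ≤ M) (x : E) {r : ℝ} (hr : 0 ≤ r) :
    μ.withDensity (fun x => ENNReal.ofReal (f x)) (closedBall x r)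
      ≤ ENNReal.ofReal M * μ (closedBall 0 1) * ENNReal.ofReal (r ^ Module.finrank ℝ E) := by
  calc μ.withDensity (fun x => ENNReal.ofReal (f x)) (closedBall x r)
      ≤ μ.withDensity (fun _ => ENNReal.ofReal M) (closedBall x r) :=
        withDensity_mono (ae_of_all _ fun y => ENNReal.ofReal_le_ofReal (hf y)) _
    _ = ENNReal.ofReal M * μ (closedBall 0 1) * ENNReal.ofReal (r ^ Module.finrank ℝ E) := by
        rw [withDensity_const, Measure.smul_apply, smul_eq_mul,
          Measure.addHaar_closedBall' μ x hr]
        ring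

lemma mul_rpow_lt_iff_lt_rpow_inv {n d K p : ℝ} (hn : 0 < n) (hd : 0 ≤ d) (hK : 0 ≤ K)
    (hp : 0 < p) : n * d ^ p < K ↔ d < (K / n) ^ p⁻¹ := by
  rw [Real.lt_rpow_inv_iff_of_pos hd (by positivity) hp, lt_div_iff₀' hn]

section RipsDeathProbability

variable {Ω : Type*} {mΩ : MeasurableSpace Ω} {μ : Measure Ω} [IsProbabilityMeasure μ] {m : ℕ}
  {X : ℕ → Ω → EuclideanSpace ℝ (Fin m)}

lemma measure_ripsDeath_lt_le (hX : ∀ i, Measurable (X i))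
    (hindep : Pairwise ((· ⟂ᵢ[μ] ·) on X))
    {r : ℝ} {c : ℝ≥0∞} (hc : ∀ i x, μ.map (X i) (closedBall x r) ≤ c) {n k : ℕ} (hk : k ≠ 0)
    (hkn : k < n) :
    μ {ω | ripsDeath (fun i : Fin n => X i ω) k < r} ≤ n ^ 2 * c / k := by
  classical
  have hadj : ∀ i j : Fin n,
      MeasurableSet {ω | (ripsGraph (fun i : Fin n => X i ω) r).Adj i j} := fun i j =>
    (MeasurableSet.const _).inter (measurableSet_le ((hX i).dist (hX j)) measurable_const)
  calc μ {ω | ripsDeath (fun i : Fin n => X i ω) k < r}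
      ≤ μ {ω | (k : ℝ≥0∞) ≤ #{p : Fin n × Fin n |
          (ripsGraph (fun i : Fin n => X i ω) r).Adj p.1 p.2}} :=
        measure_mono fun ω hω => by exact_mod_cast le_card_adj_ripsGraph_of_ripsDeath_lt hkn hω
    _ ≤ Fintype.card (Fin n) ^ 2 * c / k :=
        measure_le_card_adj_le _ hadj (fun i j hij => (measure_mono fun ω h => h.2).trans
          (measure_dist_le_le_of_indepFun (hX i) (hX j) (hindep (Fin.val_injective.ne hij))
            (hc j)))
          (by exact_mod_cast hk) (ENNReal.natCast_ne_top k)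
    _ = n ^ 2 * c / k := by rw [Fintype.card_fin]

theorem tendstoInMeasure_ripsDeath_zero (hX : ∀ i, Measurable (X i))
    (hindep : Pairwise ((· ⟂ᵢ[μ] ·) on X)) (hident : ∀ i, IdentDistrib (X i) (X 0) μ μ)
    {γ : ℝ} (hγ : γ < 1) {w : ℕ → ℕ} (hw : ∀ᶠ n in atTop, (w n : ℝ) < γ * n) :
    TendstoInMeasure μ (fun n ω => ripsDeath (fun i : Fin n => X i ω) (w n)) atTop
      (fun _ => 0) := by
  classical
  rw [tendstoInMeasure_iff_dist]
  intro ε hε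
  set β := (1 - γ) / 2 with hβ
  have hβ0 : 0 < β := by linarith
  obtain ⟨K, hK, hout⟩ := exists_isCompact_measureReal_preimage_compl_lt (μ := μ) (hX 0) hβ0
  obtain ⟨t, -, ht, hKt⟩ := hK.finite_cover_balls (e := ε / 4) (by positivity)
  have hcover : ∀ y ∈ K, ∃ c ∈ ht.toFinset, dist y c < ε / 2 / 2 := fun y hy => by
    obtain ⟨c, hc, hyc⟩ := Set.mem_iUnion₂.mp (hKt hy)
    exact ⟨c, ht.mem_toFinset.mpr hc, by rw [mem_ball] at hyc; linarith⟩
  have hsmall : ∀ᶠ n : ℕ in atTop, (#ht.toFinset : ℝ) ≤ β * n :=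
    (tendsto_natCast_atTop_atTop.const_mul_atTop hβ0).eventually_ge_atTop _
  refine tendsto_of_tendsto_of_tendsto_of_le_of_le' tendsto_const_nhds
    (tendsto_measure_lt_card_mem hX hindep hident hK.isClosed.measurableSet.compl hout)
    (Eventually.of_forall fun n => zero_le) ?_
  filter_upwards [hw, hsmall] with n hwn htn
  refine measure_mono fun ω hω => ?_
  by_contra hfew
  simp only [Set.mem_ofPred_eq, not_lt] at hω hfew
  have hfew' : (#{i : Fin n | X i ω ∉ K} : ℝ) ≤ β * n := by
    simpa only [Set.mem_compl_iff] using hfew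
  have hcard : #ht.toFinset + #{i : Fin n | X i ω ∉ K} ≤ n - w n := by
    have hn : β * n + β * n + γ * n = n := by rw [hβ]; ring
    have : #ht.toFinset + #{i : Fin n | X i ω ∉ K} + w n ≤ n := by
      exact_mod_cast (show (#ht.toFinset + #{i : Fin n | X i ω ∉ K} + w n : ℝ) ≤ n by linarith)
    omega
  have hd := ripsDeath_le_of_forall_exists_dist_lt (by positivity) hcover hcard
  rw [Real.dist_eq, sub_zero, abs_of_nonneg (ripsDeath_nonneg _ _)] at hω
  linarith

theorem tendsto_measure_mul_ripsDeath_rpow_lt (hX : ∀ i, Measurable (X i))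
    (hindep : Pairwise ((· ⟂ᵢ[μ] ·) on X)) {C : ℝ≥0∞} (hC : C ≠ ∞)
    (hball : ∀ i x r, 0 ≤ r → μ.map (X i) (closedBall x r) ≤ C * ENNReal.ofReal (r ^ m))
    {w : ℕ → ℕ} (hw : Tendsto w atTop atTop) (hwn : ∀ᶠ n in atTop, w n < n) {K : ℝ}
    (hK : 0 < K) :
    Tendsto (fun n : ℕ =>
        μ {ω | n * ripsDeath (fun i : Fin n => X i ω) (w n) ^ ((m : ℝ) / 2) < K}) atTop (𝓝 0) := by
  rcases Nat.eq_zero_or_pos m with rfl | hm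
  · refine tendsto_const_nhds.congr' ?_
    filter_upwards [eventually_ge_atTop ⌈K⌉₊] with n hn
    have hKn : K ≤ n := (Nat.le_ceil K).trans (by exact_mod_cast hn)
    simp [not_lt.mpr hKn]
  have hlim : Tendsto (fun n => C * ENNReal.ofReal (K ^ 2) / w n) atTop (𝓝 0) := by
    simpa using ENNReal.Tendsto.const_div (ENNReal.tendsto_nat_nhds_top.comp hw)
      (Or.inr (ENNReal.mul_ne_top hC ENNReal.ofReal_ne_top))
  refine tendsto_of_tendsto_of_tendsto_of_le_of_le' tendsto_const_nhds hlim
    (Eventually.of_forall fun n => zero_le) ?_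
  filter_upwards [hwn, hw.eventually_gt_atTop 0] with n hwn hw0
  have hn : (0 : ℝ) < n := by exact_mod_cast hw0.trans hwn
  set r := (K / n) ^ ((m : ℝ) / 2)⁻¹
  have hr : 0 ≤ r := by positivity
  have hrm : r ^ m = (K / n) ^ 2 := by
    rw [← Real.rpow_natCast, ← Real.rpow_mul (by positivity)]
    norm_num [hm.ne']
  have hscale : (n : ℝ≥0∞) ^ 2 * (C * ENNReal.ofReal (r ^ m)) = C * ENNReal.ofReal (K ^ 2) := by
    rw [hrm, mul_left_comm, ← ENNReal.ofReal_natCast, ← ENNReal.ofReal_pow hn.le,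
      ← ENNReal.ofReal_mul (by positivity), div_pow, mul_div_cancel₀ _ (by positivity)]
  calc μ {ω | n * ripsDeath (fun i : Fin n => X i ω) (w n) ^ ((m : ℝ) / 2) < K}
      = μ {ω | ripsDeath (fun i : Fin n => X i ω) (w n) < r} := by
        simp only [r, mul_rpow_lt_iff_lt_rpow_inv hn (ripsDeath_nonneg _ _) hK.le
          (by positivity : (0 : ℝ) < m / 2)]
    _ ≤ n ^ 2 * (C * ENNReal.ofReal (r ^ m)) / w n :=
        measure_ripsDeath_lt_le hX hindep (fun i x => hball i x r hr) hw0.ne' hwn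
    _ = C * ENNReal.ofReal (K ^ 2) / w n := by rw [hscale]

end RipsDeathProbability

theorem ripsDeath_admissible_in_probability_general {m : ℕ}
    (f : EuclideanSpace ℝ (Fin m) → ℝ)
    {M' : ℝ} (hfM' : ∀ x, f x ≤ M')
    {γ₁ γ₂ : ℝ} (hγ1 : 0 < γ₁) (hγ2 : γ₂ < 1)
    (w : ℕ → ℕ) (hw : ∀ᶠ n : ℕ in atTop, γ₁ * n < (w n : ℝ) ∧ (w n : ℝ) < γ₂ * n)
    {Ω : Type*} [MeasureSpace Ω] [IsProbabilityMeasure (ℙ : Measure Ω)]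
    (X : ℕ → Ω → EuclideanSpace ℝ (Fin m)) (hmeas : ∀ i, Measurable (X i))
    (hindep : iIndepFun X ℙ)
    (hlaw : ∀ i, Measure.map (X i) ℙ = volume.withDensity fun x => ENNReal.ofReal (f x)) :
    TendstoInMeasure ℙ (fun n ω => ripsDeath (fun i : Fin n => X i ω) (w n)) atTop
      (fun _ => (0 : ℝ)) ∧
    ∀ K > (0 : ℝ),
      Tendsto (fun n : ℕ =>
          (ℙ {ω | K ≤ (n : ℝ) * ripsDeath (fun i : Fin n => X i ω) (w n) ^ ((m : ℝ) / 2)}).toReal)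
        atTop (nhds 1) := by
  have hpair : Pairwise ((· ⟂ᵢ[ℙ] ·) on X) := fun i j hij => hindep.indepFun hij
  have hident : ∀ i, IdentDistrib (X i) (X 0) ℙ ℙ := fun i =>
    ⟨(hmeas i).aemeasurable, (hmeas 0).aemeasurable, by rw [hlaw, hlaw]⟩
  have hball : ∀ i x r, 0 ≤ r → Measure.map (X i) ℙ (closedBall x r)
      ≤ ENNReal.ofReal M' * volume (closedBall (0 : EuclideanSpace ℝ (Fin m)) 1)
        * ENNReal.ofReal (r ^ m) := fun i x r hr => by
    simpa [hlaw i] using withDensity_closedBall_le volume hfM' x hr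
  have hw_top : Tendsto w atTop atTop := tendsto_natCast_atTop_iff.mp <|
    tendsto_atTop_mono' atTop (hw.mono fun n h => h.1.le)
      (tendsto_natCast_atTop_atTop.const_mul_atTop hγ1)
  have hw_lt : ∀ᶠ n in atTop, w n < n := hw.mono fun n h => by
    exact_mod_cast h.2.trans_le (mul_le_of_le_one_left n.cast_nonneg hγ2.le)
  refine ⟨tendstoInMeasure_ripsDeath_zero hmeas hpair hident hγ2 (hw.mono fun n h => h.2),
    fun K hK => tendsto_measure_toReal_one_of_tendsto_measure_compl ?_⟩
  simpa only [Set.compl_ofPred, not_le] using tendsto_measure_mul_ripsDeath_rpow_lt hmeas hpair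
    (ENNReal.mul_ne_top ENNReal.ofReal_ne_top measure_closedBall_lt_top.ne) hball hw_top hw_lt hK

/-- Let `f` be a Lipschitz, bounded probability density on `ℝ^m`,
`0 < γ₁ < γ₂ < 1`, and `(ω_n)` integers with `γ₁ n < ω_n < γ₂ n` for large `n`.  For i.i.d.
samples with density `f`, the quantile death time `d_{ω_n}` tends to `0` in probability, and
`n · d_{ω_n}^{m/2} → ∞` in probability (for every `K > 0`,
`P(n · d_{ω_n}^{m/2} ≥ K) → 1`); i.e. `d_{ω_n}` satisfies the defining limits of an
admissible bandwidth in probability. -/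
theorem ripsDeath_admissible_in_probability {m : ℕ}
    (f : EuclideanSpace ℝ (Fin m) → ℝ) (hf0 : ∀ x, 0 ≤ f x) (hfint : ∫ x, f x = 1)
    {M : ℝ} (hM : 0 < M) (hLip : LipschitzWith M.toNNReal f)
    {M' : ℝ} (hfM' : ∀ x, f x ≤ M')
    {γ₁ γ₂ : ℝ} (hγ1 : 0 < γ₁) (hγ12 : γ₁ < γ₂) (hγ2 : γ₂ < 1)
    (w : ℕ → ℕ) (hw : ∀ᶠ n : ℕ in atTop, γ₁ * n < (w n : ℝ) ∧ (w n : ℝ) < γ₂ * n)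
    {Ω : Type*} [MeasureSpace Ω] [IsProbabilityMeasure (ℙ : Measure Ω)]
    (X : ℕ → Ω → EuclideanSpace ℝ (Fin m)) (hmeas : ∀ i, Measurable (X i))
    (hindep : iIndepFun X ℙ)
    (hlaw : ∀ i, Measure.map (X i) ℙ = volume.withDensity fun x => ENNReal.ofReal (f x)) :
    TendstoInMeasure ℙ (fun n ω => ripsDeath (fun i : Fin n => X i ω) (w n)) atTop
      (fun _ => (0 : ℝ)) ∧
    ∀ K > (0 : ℝ),
      Tendsto (fun n : ℕ =>
          (ℙ {ω | K ≤ (n : ℝ) * ripsDeath (fun i : Fin n => X i ω) (w n) ^ ((m : ℝ) / 2)}).toReal)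
        atTop (nhds 1) :=
  ripsDeath_admissible_in_probability_general f hfM' hγ1 hγ2 w hw X hmeas hindep hlaw
end
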